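/- arXiv:2105.07017 — 9 statements merged into one kernel-verified Lean document; each statement's English description precedes it below -/
import Mathlib

section
/- Let U be a real n×p matrix with UᵀU = I_p, let U_⊥ be a real n×(n−p) matrix such that the n×n matrix (U U_⊥) is orthogonal, let A be a p×p real skew-symmetric matrix and B ∈ ℝ^{(n−p)×p}, and let U_⊥B = QΣVᵀ be a compact singular value decomposition (Q an n×p matrix with QᵀQ = I_p, Σ a p×p nonnegative diagonal matrix, V a p×p orthogonal matrix). Then for every t ∈ ℝ the matrix γ(t) = (UV cos(tΣ) + Q sin(tΣ))Vᵀ exp_m(tA) satisfies γ(t)ᵀγ(t) = I_p, i.e. the economy-size quasi-geodesic stays on the Stiefel manifold St(n,p). -/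
open Matrix NormedSpace

/-- The economy-size quasi-geodesic
`γ(t) = (U V cos(tΣ) + Q sin(tΣ)) Vᵀ exp_m(tA)` stays on the Stiefel manifold. -/
theorem stmt0 (n p : ℕ) (U : Matrix (Fin n) (Fin p) ℝ)
    (Uperp : Matrix (Fin n) (Fin (n - p)) ℝ)
    (A : Matrix (Fin p) (Fin p) ℝ) (B : Matrix (Fin (n - p)) (Fin p) ℝ)
    (Q : Matrix (Fin n) (Fin p) ℝ) (Sg V : Matrix (Fin p) (Fin p) ℝ)
    (hU : Uᵀ * U = 1)
    (hO₁ : (fromCols U Uperp)ᵀ * fromCols U Uperp = 1)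
    (hO₂ : fromCols U Uperp * (fromCols U Uperp)ᵀ = 1)
    (hA : Aᵀ = -A)
    (hSVD : Uperp * B = Q * Sg * Vᵀ)
    (hQ : Qᵀ * Q = 1)
    (hSgdiag : Sg.IsDiag) (hSgpos : ∀ i, 0 ≤ Sg i i)
    (hV₁ : Vᵀ * V = 1) (hV₂ : V * Vᵀ = 1) :
    ∀ t : ℝ,
      ((U * V * Matrix.diagonal (fun i => Real.cos (t * Sg i i)) +
          Q * Matrix.diagonal (fun i => Real.sin (t * Sg i i))) * Vᵀ * NormedSpace.exp (t • A))ᵀ *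
        ((U * V * Matrix.diagonal (fun i => Real.cos (t * Sg i i)) +
          Q * Matrix.diagonal (fun i => Real.sin (t * Sg i i))) * Vᵀ * NormedSpace.exp (t • A)) = 1 := by
  intro t
  -- U ⊥ Uperp
  have hperp : Uᵀ * Uperp = 0 := by
    rw [transpose_fromCols, fromRows_mul_fromCols] at hO₁
    have := congrArg (fun M => toBlocks₁₂ M) hO₁
    simp [toBlocks₁₂, Matrix.one_apply, fromBlocks] at this
    exact Matrix.ext fun i j => congrFun (congrFun this i) j
  -- UᵀQΣ = 0
  have hUQS : Uᵀ * Q * Sg = 0 := by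
    have h1 : Uᵀ * (Q * Sg * Vᵀ) = 0 := by
      rw [← hSVD, ← Matrix.mul_assoc, hperp, Matrix.zero_mul]
    have h2 : Uᵀ * (Q * Sg * Vᵀ) * V = 0 * V := by rw [h1]
    rw [Matrix.zero_mul] at h2
    simp only [Matrix.mul_assoc, hV₁, Matrix.mul_one] at h2 ⊢
    exact h2
  -- entrywise: (UᵀQ) j k * Sg k k = 0
  have hentry : ∀ j k, (Uᵀ * Q) j k * Sg k k = 0 := by
    intro j k
    have := congrFun (congrFun hUQS j) k
    rwa [← hSgdiag.diagonal_diag, Matrix.mul_diagonal, Matrix.zero_apply] at this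
  -- UᵀQ·sin(tΣ) = 0
  have hsin : Uᵀ * Q * Matrix.diagonal (fun i => Real.sin (t * Sg i i)) = 0 := by
    ext j k
    rw [Matrix.mul_diagonal, Matrix.zero_apply]
    rcases eq_or_ne (Sg k k) 0 with h | h
    · simp [h]
    · have : (Uᵀ * Q) j k = 0 := by
        rcases mul_eq_zero.mp (hentry j k) with h' | h'
        · exact h'
        · exact absurd h' h
      simp [this]
  -- exp part
  have hE : (NormedSpace.exp (t • A))ᵀ * NormedSpace.exp (t • A) = 1 := by
    rw [← Matrix.exp_transpose, transpose_smul, hA, smul_neg]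
    have h := Matrix.exp_add_of_commute (-(t • A)) (t • A)
      (Commute.neg_left (Commute.refl _))
    rw [neg_add_cancel, exp_zero] at h
    exact h.symm
  set C := Matrix.diagonal (fun i => Real.cos (t * Sg i i)) with hC
  set S := Matrix.diagonal (fun i => Real.sin (t * Sg i i)) with hS
  have hCS : Cᵀ * C + Sᵀ * S = 1 := by
    rw [hC, hS, diagonal_transpose, diagonal_transpose, diagonal_mul_diagonal,
      diagonal_mul_diagonal]
    ext i j
    simp only [Matrix.add_apply, Matrix.diagonal_apply, Matrix.one_apply]
    split_ifs with h
    · nlinarith [Real.sin_sq_add_cos_sq (t * Sg i i)]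
    · simp
  have hM : (U * V * C + Q * S)ᵀ * (U * V * C + Q * S) = 1 := by
    rw [transpose_add, Matrix.add_mul, Matrix.mul_add, Matrix.mul_add]
    have e1 : (U * V * C)ᵀ * (U * V * C) = Cᵀ * C := by
      rw [transpose_mul, transpose_mul]
      calc Cᵀ * (Vᵀ * Uᵀ) * (U * V * C)
          = Cᵀ * (Vᵀ * ((Uᵀ * U) * V)) * C := by
            simp only [Matrix.mul_assoc]
        _ = Cᵀ * C := by rw [hU, Matrix.one_mul, hV₁, Matrix.mul_one]
    have e2 : (U * V * C)ᵀ * (Q * S) = 0 := by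
      rw [transpose_mul, transpose_mul]
      calc Cᵀ * (Vᵀ * Uᵀ) * (Q * S) = Cᵀ * Vᵀ * (Uᵀ * Q * S) := by
            simp only [Matrix.mul_assoc]
        _ = 0 := by rw [hsin, Matrix.mul_zero]
    have e3 : (Q * S)ᵀ * (U * V * C) = 0 := by
      have := congrArg Matrix.transpose e2
      rwa [transpose_mul, transpose_transpose, transpose_zero] at this
    have e4 : (Q * S)ᵀ * (Q * S) = Sᵀ * S := by
      rw [transpose_mul]
      calc Sᵀ * Qᵀ * (Q * S) = Sᵀ * ((Qᵀ * Q) * S) := by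
            simp only [Matrix.mul_assoc]
        _ = Sᵀ * S := by rw [hQ, Matrix.one_mul]
    rw [e1, e2, e3, e4, add_zero, zero_add, hCS]
  calc ((U * V * C + Q * S) * Vᵀ * NormedSpace.exp (t • A))ᵀ *
        ((U * V * C + Q * S) * Vᵀ * NormedSpace.exp (t • A))
      = (NormedSpace.exp (t • A))ᵀ * (V * ((U * V * C + Q * S)ᵀ * (U * V * C + Q * S)) * Vᵀ *
          NormedSpace.exp (t • A)) := by
        simp only [transpose_mul, transpose_transpose, Matrix.mul_assoc]
    _ = 1 := by rw [hM, Matrix.mul_one, hV₂, Matrix.one_mul, hE]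
end

section
/- Let U be a real n×p matrix with UᵀU = I_p, let U_⊥ be a real n×(n−p) matrix such that (U U_⊥) is orthogonal, let A be a p×p real skew-symmetric matrix and B ∈ ℝ^{(n−p)×p}, and let U_⊥B = QΣVᵀ be a compact singular value decomposition with QᵀQ = I_p (Q of size n×p), Σ diagonal nonnegative, V ∈ O(p), and moreover UᵀQ = 0. Then for all t ∈ ℝ, (UV cos(tΣ) + Q sin(tΣ))Vᵀ exp_m(tA) = (U U_⊥) · exp_m(t·[[0, −Bᵀ],[B, 0]]) · [I_p; 0] · exp_m(tA), where [[0, −Bᵀ],[B, 0]] denotes the n×n block skew-symmetric matrix with upper-left p×p block 0, upper-right block −Bᵀ, lower-left block B and lower-right block 0, and [I_p; 0] is the n×p matrix whose top p×p block is I_p and bottom block is 0. -/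
open Matrix NormedSpace

set_option maxHeartbeats 1000000 in
/-- The economy-size quasi-geodesic equals the lifted Grassmann-geodesic form
`(U U⊥) exp_m(t [[0,−Bᵀ],[B,0]]) [I_p; 0] exp_m(tA)`. -/
theorem stmt1 (n p : ℕ) (U : Matrix (Fin n) (Fin p) ℝ)
    (Uperp : Matrix (Fin n) (Fin (n - p)) ℝ)
    (A : Matrix (Fin p) (Fin p) ℝ) (B : Matrix (Fin (n - p)) (Fin p) ℝ)
    (Q : Matrix (Fin n) (Fin p) ℝ) (Sg V : Matrix (Fin p) (Fin p) ℝ)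
    (hU : Uᵀ * U = 1)
    (hO₁ : (fromCols U Uperp)ᵀ * fromCols U Uperp = 1)
    (hO₂ : fromCols U Uperp * (fromCols U Uperp)ᵀ = 1)
    (hA : Aᵀ = -A)
    (hSVD : Uperp * B = Q * Sg * Vᵀ)
    (hQ : Qᵀ * Q = 1)
    (hSgdiag : Sg.IsDiag) (hSgpos : ∀ i, 0 ≤ Sg i i)
    (hV₁ : Vᵀ * V = 1) (hV₂ : V * Vᵀ = 1)
    (hUQ : Uᵀ * Q = 0) :
    ∀ t : ℝ,
      (U * V * Matrix.diagonal (fun i => Real.cos (t * Sg i i)) +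
          Q * Matrix.diagonal (fun i => Real.sin (t * Sg i i))) * Vᵀ * exp (t • A) =
        fromCols U Uperp * exp (t • fromBlocks 0 (-Bᵀ) B 0) *
          fromRows (1 : Matrix (Fin p) (Fin p) ℝ) (0 : Matrix (Fin (n - p)) (Fin p) ℝ) * exp (t • A) := by
  intro t
  have hSg : Sg = Matrix.diagonal Sg.diag := hSgdiag.diagonal_diag.symm
  set d : Fin p → ℝ := Sg.diag with hd
  set P := fromCols U Uperp with hP
  set W : Matrix (Fin n) (Fin p) ℝ := U * V with hW
  set X : Matrix (Fin p ⊕ Fin (n - p)) (Fin p ⊕ Fin (n - p)) ℝ := fromBlocks 0 (-Bᵀ) B 0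
    with hX
  set M : Matrix (Fin n) (Fin n) ℝ := Q * Sg * Vᵀ * Uᵀ - U * (V * Sg * Qᵀ) with hM
  -- basic transposed facts
  have hQU : Qᵀ * U = 0 := by
    have := congrArg Matrix.transpose hUQ
    simpa using this
  have hSgT : Sgᵀ = Sg := by
    rw [hSg, Matrix.diagonal_transpose]
  have hSVDT : Bᵀ * Uperpᵀ = V * Sg * Qᵀ := by
    have := congrArg Matrix.transpose hSVD
    simp only [Matrix.transpose_mul, Matrix.transpose_transpose, hSgT] at this
    rw [this, Matrix.mul_assoc]
  -- `Pᵀ * U = [I; 0]`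
  have hPfr : P * fromRows (1 : Matrix (Fin p) (Fin p) ℝ) (0 : Matrix (Fin (n - p)) (Fin p) ℝ) = U := by
    rw [hP, fromCols_mul_fromRows]
    simp
  have hPU : Pᵀ * U = fromRows (1 : Matrix (Fin p) (Fin p) ℝ) (0 : Matrix (Fin (n - p)) (Fin p) ℝ) := by
    rw [← hPfr, ← Matrix.mul_assoc, hO₁, Matrix.one_mul]
  -- conjugation by P (P is rectangular w.r.t. index types, so do it by hand)
  have hgen : ∀ Y : Matrix (Fin p ⊕ Fin (n - p)) (Fin p ⊕ Fin (n - p)) ℝ,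
      exp (P * Y * Pᵀ) = P * exp Y * Pᵀ := by
    intro Y
    letI : SeminormedRing (Matrix (Fin p ⊕ Fin (n - p)) (Fin p ⊕ Fin (n - p)) ℝ) :=
      Matrix.linftyOpSemiNormedRing
    letI : NormedRing (Matrix (Fin p ⊕ Fin (n - p)) (Fin p ⊕ Fin (n - p)) ℝ) :=
      Matrix.linftyOpNormedRing
    letI : NormedAlgebra ℝ (Matrix (Fin p ⊕ Fin (n - p)) (Fin p ⊕ Fin (n - p)) ℝ) :=
      Matrix.linftyOpNormedAlgebra
    letI : SeminormedRing (Matrix (Fin n) (Fin n) ℝ) := Matrix.linftyOpSemiNormedRing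
    letI : NormedRing (Matrix (Fin n) (Fin n) ℝ) := Matrix.linftyOpNormedRing
    letI : NormedAlgebra ℝ (Matrix (Fin n) (Fin n) ℝ) := Matrix.linftyOpNormedAlgebra
    have hpowP : ∀ k : ℕ, (P * Y * Pᵀ) ^ k = P * Y ^ k * Pᵀ := by
      intro k
      induction k with
      | zero => simp [hO₂]
      | succ k ih =>
        rw [pow_succ, ih, pow_succ]
        simp only [Matrix.mul_assoc]
        rw [← Matrix.mul_assoc Pᵀ P, hO₁, Matrix.one_mul]
    have h1 := exp_series_hasSum_exp' (𝕂 := ℝ) Y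
    have h2 := h1.map
      (AddMonoidHom.mk' (fun Z : Matrix (Fin p ⊕ Fin (n - p)) (Fin p ⊕ Fin (n - p)) ℝ =>
        P * Z * Pᵀ) fun a b => by simp only [Matrix.mul_add, Matrix.add_mul])
      ((continuous_const.matrix_mul continuous_id).matrix_mul continuous_const)
    have h3 : HasSum (fun k : ℕ => ((k.factorial : ℝ))⁻¹ • (P * Y * Pᵀ) ^ k)
        (P * exp Y * Pᵀ) := by
      convert h2 using 1
      funext k
      simp only [Function.comp, AddMonoidHom.mk'_apply]
      rw [hpowP k, Matrix.mul_smul, Matrix.smul_mul]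
      rfl
    exact (exp_series_hasSum_exp' (𝕂 := ℝ) (P * Y * Pᵀ)).unique h3
  have hPXP : P * X * Pᵀ = M := by
    rw [hP, hX, Matrix.transpose_fromCols, fromCols_mul_fromBlocks,
      fromCols_mul_fromRows]
    simp only [Matrix.mul_zero, Matrix.zero_mul, add_zero, zero_add,
      Matrix.mul_neg, Matrix.neg_mul, Matrix.mul_assoc]
    rw [hM, ← Matrix.mul_assoc Uperp B, hSVD, hSVDT, ← sub_eq_add_neg, Matrix.mul_assoc,
      Matrix.mul_assoc]
  have hconj : P * exp (t • X) * Pᵀ = exp (t • M) := by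
    rw [← hPXP, ← Matrix.smul_mul, ← Matrix.mul_smul, hgen (t • X)]
  -- products with M
  have hUUV : Uᵀ * (U * V) = V := by rw [← Matrix.mul_assoc, hU, Matrix.one_mul]
  have hQUV : Qᵀ * (U * V) = 0 := by rw [← Matrix.mul_assoc, hQU, Matrix.zero_mul]
  have hMW : M * W = Q * Sg := by
    rw [hM, hW]
    simp only [Matrix.sub_mul, Matrix.mul_assoc, hUUV, hQUV]
    simp [hV₁]
  have hMQ : M * Q = -(W * Sg) := by
    rw [hM, hW]
    simp only [Matrix.sub_mul, Matrix.mul_assoc, hUQ, hQ]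
    simp [Matrix.mul_assoc]
  -- powers of M against W and Q
  have hpow : ∀ m : ℕ, M ^ (2*m) * W = ((-1:ℝ)^m) • (W * Sg^(2*m)) ∧
      M ^ (2*m) * Q = ((-1:ℝ)^m) • (Q * Sg^(2*m)) := by
    intro m
    induction m with
    | zero => simp
    | succ m ih =>
      obtain ⟨ihW, ihQ⟩ := ih
      have h2 : 2*(m+1) = 2*m + 1 + 1 := by ring
      have hM2W : M * (M * W) = -(W * (Sg * Sg)) := by
        rw [hMW, ← Matrix.mul_assoc, hMQ, Matrix.neg_mul, Matrix.mul_assoc]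
      have hM2Q : M * (M * Q) = -(Q * (Sg * Sg)) := by
        rw [hMQ, Matrix.mul_neg, ← Matrix.mul_assoc, hMW, Matrix.mul_assoc]
      constructor
      · rw [h2, pow_succ, pow_succ, Matrix.mul_assoc, Matrix.mul_assoc, hM2W,
          Matrix.mul_neg, ← Matrix.mul_assoc, ← Matrix.mul_assoc, ihW]
        rw [Matrix.smul_mul, Matrix.smul_mul, ← neg_smul]
        rw [Matrix.mul_assoc W, ← pow_succ, Matrix.mul_assoc W, ← pow_succ]
        module
      · rw [h2, pow_succ, pow_succ, Matrix.mul_assoc, Matrix.mul_assoc, hM2Q,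
          Matrix.mul_neg, ← Matrix.mul_assoc, ← Matrix.mul_assoc, ihQ]
        rw [Matrix.smul_mul, Matrix.smul_mul, ← neg_smul]
        rw [Matrix.mul_assoc Q, ← pow_succ, Matrix.mul_assoc Q, ← pow_succ]
        module
  have hpowodd : ∀ m : ℕ, M ^ (2*m+1) * W = ((-1:ℝ)^m) • (Q * Sg^(2*m+1)) := by
    intro m
    rw [pow_succ, Matrix.mul_assoc, hMW, ← Matrix.mul_assoc, (hpow m).2,
      Matrix.smul_mul, Matrix.mul_assoc, ← pow_succ]
  -- the diagonal power identity
  have hSgpow : ∀ k : ℕ, Sg ^ k = Matrix.diagonal (fun i => d i ^ k) := by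
    intro k
    rw [hSg, Matrix.diagonal_pow]
    rfl
  -- series terms, even and odd
  have heven : ∀ m : ℕ, ((((2*m).factorial :ℝ))⁻¹ • (t • M)^(2*m)) * W =
      W * Matrix.diagonal (fun i => (-1:ℝ)^m * (t * d i)^(2*m) / ((2*m).factorial : ℝ)) := by
    intro m
    rw [smul_pow, Matrix.smul_mul, Matrix.smul_mul, (hpow m).1, smul_smul, smul_smul]
    rw [show (fun i => (-1:ℝ)^m * (t * d i)^(2*m) / (((2*m).factorial : ℝ))) =
        ((((2*m).factorial :ℝ))⁻¹ * t^(2*m) * (-1)^m) • (fun i => (d i)^(2*m)) from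
      funext fun i => by simp only [Pi.smul_apply, smul_eq_mul]; ring]
    rw [Matrix.diagonal_smul, Matrix.mul_smul, hSgpow]
  have hodd : ∀ m : ℕ, ((((2*m+1).factorial :ℝ))⁻¹ • (t • M)^(2*m+1)) * W =
      Q * Matrix.diagonal (fun i => (-1:ℝ)^m * (t * d i)^(2*m+1) / ((2*m+1).factorial : ℝ)) := by
    intro m
    rw [smul_pow, Matrix.smul_mul, Matrix.smul_mul, hpowodd m, smul_smul, smul_smul]
    rw [show (fun i => (-1:ℝ)^m * (t * d i)^(2*m+1) / (((2*m+1).factorial : ℝ))) =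
        ((((2*m+1).factorial :ℝ))⁻¹ * t^(2*m+1) * (-1)^m) • (fun i => (d i)^(2*m+1)) from
      funext fun i => by simp only [Pi.smul_apply, smul_eq_mul]; ring]
    rw [Matrix.diagonal_smul, Matrix.mul_smul, hSgpow]
  -- HasSum statements
  set C : Matrix (Fin p) (Fin p) ℝ := Matrix.diagonal (fun i => Real.cos (t * d i)) with hC
  set S : Matrix (Fin p) (Fin p) ℝ := Matrix.diagonal (fun i => Real.sin (t * d i)) with hS
  have hWC : HasSum (fun m : ℕ =>
      W * Matrix.diagonal (fun i => (-1:ℝ)^m * (t * d i)^(2*m) / ((2*m).factorial : ℝ))) (W * C) := by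
    have h1 : HasSum (fun m : ℕ => (fun i => (-1:ℝ)^m * (t * d i)^(2*m) / ((2*m).factorial : ℝ)))
        (fun i => Real.cos (t * d i)) :=
      Pi.hasSum.mpr fun i => Real.hasSum_cos (t * d i)
    have h2 := h1.matrix_diagonal
    exact h2.map (AddMonoidHom.mk' (fun Y : Matrix (Fin p) (Fin p) ℝ => W * Y) fun a b => Matrix.mul_add W a b)
      (continuous_const.matrix_mul continuous_id)
  have hQS : HasSum (fun m : ℕ =>
      Q * Matrix.diagonal (fun i => (-1:ℝ)^m * (t * d i)^(2*m+1) / ((2*m+1).factorial : ℝ))) (Q * S) := by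
    have h1 : HasSum (fun m : ℕ => (fun i => (-1:ℝ)^m * (t * d i)^(2*m+1) / ((2*m+1).factorial : ℝ)))
        (fun i => Real.sin (t * d i)) :=
      Pi.hasSum.mpr fun i => Real.hasSum_sin (t * d i)
    have h2 := h1.matrix_diagonal
    exact h2.map (AddMonoidHom.mk' (fun Y : Matrix (Fin p) (Fin p) ℝ => Q * Y) fun a b => Matrix.mul_add Q a b)
      (continuous_const.matrix_mul continuous_id)
  have hexp : HasSum (fun k : ℕ => (((k.factorial :ℝ))⁻¹ • (t • M)^k) * W) (exp (t • M) * W) := by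
    letI : SeminormedRing (Matrix (Fin n) (Fin n) ℝ) := Matrix.linftyOpSemiNormedRing
    letI : NormedRing (Matrix (Fin n) (Fin n) ℝ) := Matrix.linftyOpNormedRing
    letI : NormedAlgebra ℝ (Matrix (Fin n) (Fin n) ℝ) := Matrix.linftyOpNormedAlgebra
    exact (exp_series_hasSum_exp' (𝕂 := ℝ) (t • M)).map
      (AddMonoidHom.mk' (fun Y : Matrix (Fin n) (Fin n) ℝ => Y * W) fun a b => Matrix.add_mul a b W)
      (continuous_id.matrix_mul continuous_const)
  have htotal : HasSum (fun k : ℕ => (((k.factorial :ℝ))⁻¹ • (t • M)^k) * W) (W * C + Q * S) := by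
    refine HasSum.even_add_odd ?_ ?_
    · convert hWC using 1
      funext m
      exact heven m
    · convert hQS using 1
      funext m
      exact hodd m
  have key : exp (t • M) * W = W * C + Q * S := hexp.unique htotal
  -- assemble
  have hfinal : P * exp (t • X) * fromRows (1 : Matrix (Fin p) (Fin p) ℝ) (0 : Matrix (Fin (n - p)) (Fin p) ℝ) =
      (W * C + Q * S) * Vᵀ := by
    have hUWV : U = W * Vᵀ := by rw [hW, Matrix.mul_assoc, hV₂, Matrix.mul_one]
    calc P * exp (t • X) * fromRows (1 : Matrix (Fin p) (Fin p) ℝ) (0 : Matrix (Fin (n - p)) (Fin p) ℝ)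
        = P * exp (t • X) * (Pᵀ * U) := by rw [hPU]
      _ = (P * exp (t • X) * Pᵀ) * U := by rw [← Matrix.mul_assoc]
      _ = exp (t • M) * U := by rw [hconj]
      _ = exp (t • M) * (W * Vᵀ) := by rw [← hUWV]
      _ = (exp (t • M) * W) * Vᵀ := by rw [Matrix.mul_assoc (exp (t • M)) W Vᵀ]
      _ = (W * C + Q * S) * Vᵀ := by rw [key]
  rw [hfinal]
  rfl
end

section
/- Let U be a real n×p matrix with UᵀU = I_p, let A ∈ so(p), B ∈ ℝ^{(n−p)×p}, let U_⊥ be such that (U U_⊥) ∈ O(n), set Δ = UA + U_⊥B, and let U_⊥B = QΣVᵀ be a compact SVD with QᵀQ = I_p, Σ diagonal nonnegative, V ∈ O(p). Then the curve γ(t) = (UV cos(tΣ) + Q sin(tΣ))Vᵀ exp_m(tA) satisfies γ(0) = U and γ′(0) = Δ; i.e. the map Δ ↦ (UV cos(Σ) + Q sin(Σ))Vᵀ exp_m(A) has the defining local properties of a retraction at U. -/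
open Matrix NormedSpace

attribute [local instance] Matrix.frobeniusNormedAddCommGroup Matrix.frobeniusNormedSpace
attribute [local instance] Matrix.frobeniusNormedRing Matrix.frobeniusNormedAlgebra

/-- Identity continuous linear equiv between matrices (frobenius norm) and pi type. -/
noncomputable def matrixPiEquiv (a b : ℕ) : Matrix (Fin a) (Fin b) ℝ ≃L[ℝ] (Fin a → Fin b → ℝ) :=
  LinearEquiv.toContinuousLinearEquiv
    { toFun := fun M => M
      invFun := fun M => M
      map_add' := fun _ _ => rfl
      map_smul' := fun _ _ => rfl
      left_inv := fun _ => rfl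
      right_inv := fun _ => rfl }

theorem hasDerivAt_matrix {a b : ℕ} {F : ℝ → Matrix (Fin a) (Fin b) ℝ}
    {F' : Matrix (Fin a) (Fin b) ℝ} {x : ℝ} :
    HasDerivAt F F' x ↔ ∀ i j, HasDerivAt (fun t => F t i j) (F' i j) x := by
  constructor
  · intro h i j
    have h1 : HasDerivAt (fun t => matrixPiEquiv a b (F t)) (matrixPiEquiv a b F') x :=
      ((matrixPiEquiv a b).toContinuousLinearMap.hasFDerivAt).comp_hasDerivAt x h
    exact (hasDerivAt_pi.mp ((hasDerivAt_pi.mp h1) i)) j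
  · intro h
    have h1 : HasDerivAt (fun t => matrixPiEquiv a b (F t)) (matrixPiEquiv a b F') x :=
      hasDerivAt_pi.mpr fun i => hasDerivAt_pi.mpr fun j => h i j
    have h2 := ((matrixPiEquiv a b).symm.toContinuousLinearMap.hasFDerivAt).comp_hasDerivAt x h1
    simp only [Function.comp_def, ContinuousLinearEquiv.coe_coe, ContinuousLinearEquiv.symm_apply_apply] at h2
    exact h2

theorem HasDerivAt.matrix_mul {a b c : ℕ} {F : ℝ → Matrix (Fin a) (Fin b) ℝ}
    {G : ℝ → Matrix (Fin b) (Fin c) ℝ} {F' : Matrix (Fin a) (Fin b) ℝ}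
    {G' : Matrix (Fin b) (Fin c) ℝ} {x : ℝ}
    (hF : HasDerivAt F F' x) (hG : HasDerivAt G G' x) :
    HasDerivAt (fun t => F t * G t) (F' * G x + F x * G') x := by
  rw [hasDerivAt_matrix] at hF hG ⊢
  intro i j
  simp only [Matrix.mul_apply, Matrix.add_apply]
  have : HasDerivAt (fun t => ∑ k, F t i k * G t k j)
      (∑ k, (F' i k * G x k j + F x i k * G' k j)) x :=
    HasDerivAt.fun_sum fun k _ => (hF i k).mul (hG k j)
  simpa [Finset.sum_add_distrib] using this

/-- The economy-size quasi-geodesic `γ` satisfies `γ(0) = U` and `γ′(0) = Δ`,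
i.e. the map `Δ ↦ γ(1)` has the defining local properties of a retraction at `U`. -/
theorem stmt3 (n p : ℕ) (U : Matrix (Fin n) (Fin p) ℝ)
    (Uperp : Matrix (Fin n) (Fin (n - p)) ℝ)
    (A : Matrix (Fin p) (Fin p) ℝ) (B : Matrix (Fin (n - p)) (Fin p) ℝ)
    (Q : Matrix (Fin n) (Fin p) ℝ) (Sg V : Matrix (Fin p) (Fin p) ℝ)
    (Δ : Matrix (Fin n) (Fin p) ℝ)
    (hU : Uᵀ * U = 1)
    (hA : Aᵀ = -A)
    (hO₁ : (fromCols U Uperp)ᵀ * fromCols U Uperp = 1)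
    (hO₂ : fromCols U Uperp * (fromCols U Uperp)ᵀ = 1)
    (hΔ : Δ = U * A + Uperp * B)
    (hSVD : Uperp * B = Q * Sg * Vᵀ)
    (hQ : Qᵀ * Q = 1)
    (hSgdiag : Sg.IsDiag) (hSgpos : ∀ i, 0 ≤ Sg i i)
    (hV₁ : Vᵀ * V = 1) (hV₂ : V * Vᵀ = 1) :
    (U * V * Matrix.diagonal (fun i => Real.cos ((0 : ℝ) * Sg i i)) +
        Q * Matrix.diagonal (fun i => Real.sin ((0 : ℝ) * Sg i i))) * Vᵀ * NormedSpace.exp ((0 : ℝ) • A)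
      = U ∧
    HasDerivAt
      (fun t : ℝ =>
        (U * V * Matrix.diagonal (fun i => Real.cos (t * Sg i i)) +
          Q * Matrix.diagonal (fun i => Real.sin (t * Sg i i))) * Vᵀ * NormedSpace.exp (t • A))
      Δ 0 := by
  constructor
  · simp only [zero_mul, Real.cos_zero, Real.sin_zero, Matrix.diagonal_one,
      Matrix.diagonal_zero, Matrix.mul_one, Matrix.mul_zero, add_zero, zero_smul, exp_zero,
      Matrix.mul_assoc, hV₂]
  · -- derivative of the cos diagonal at 0 is 0
    have hC : HasDerivAt (fun t : ℝ => Matrix.diagonal (fun i => Real.cos (t * Sg i i)))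
        (0 : Matrix (Fin p) (Fin p) ℝ) 0 := by
      rw [hasDerivAt_matrix]
      intro i j
      by_cases h : i = j
      · subst h
        simp only [Matrix.diagonal_apply_eq, Matrix.zero_apply]
        have : HasDerivAt (fun t : ℝ => Real.cos (t * Sg i i))
            (-Real.sin (0 * Sg i i) * Sg i i) 0 :=
          (Real.hasDerivAt_cos (0 * Sg i i)).comp 0 ((hasDerivAt_id 0).mul_const (Sg i i) |>.congr_deriv (by simp))
        simpa using this
      · simp only [Matrix.diagonal_apply_ne _ h, Matrix.zero_apply]
        exact hasDerivAt_const 0 0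
    -- derivative of the sin diagonal at 0 is diagonal (Sg i i)
    have hS : HasDerivAt (fun t : ℝ => Matrix.diagonal (fun i => Real.sin (t * Sg i i)))
        (Matrix.diagonal fun i => Sg i i) 0 := by
      rw [hasDerivAt_matrix]
      intro i j
      by_cases h : i = j
      · subst h
        simp only [Matrix.diagonal_apply_eq]
        have : HasDerivAt (fun t : ℝ => Real.sin (t * Sg i i))
            (Real.cos (0 * Sg i i) * Sg i i) 0 :=
          (Real.hasDerivAt_sin (0 * Sg i i)).comp 0 ((hasDerivAt_id 0).mul_const (Sg i i) |>.congr_deriv (by simp))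
        simpa using this
      · simp only [Matrix.diagonal_apply_ne _ h, Matrix.zero_apply]
        exact hasDerivAt_const 0 0
    have hE : HasDerivAt (fun t : ℝ => NormedSpace.exp (t • A)) (NormedSpace.exp ((0:ℝ) • A) * A) 0 :=
      hasDerivAt_exp_smul_const A (0:ℝ)
    have hE' : HasDerivAt (fun t : ℝ => NormedSpace.exp (t • A)) A 0 := by
      simpa using hE
    have hUV : HasDerivAt (fun _ : ℝ => U * V) (0 : Matrix (Fin n) (Fin p) ℝ) 0 :=
      hasDerivAt_const 0 _
    have hQc : HasDerivAt (fun _ : ℝ => Q) (0 : Matrix (Fin n) (Fin p) ℝ) 0 :=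
      hasDerivAt_const 0 _
    have hVt : HasDerivAt (fun _ : ℝ => Vᵀ) (0 : Matrix (Fin p) (Fin p) ℝ) 0 :=
      hasDerivAt_const 0 _
    have hmain := ((((hUV.matrix_mul hC).fun_add (hQc.matrix_mul hS)).matrix_mul hVt).matrix_mul hE')
    convert hmain using 1
    simp only [zero_mul, Real.cos_zero, Real.sin_zero, Matrix.diagonal_one,
      Matrix.diagonal_zero, Matrix.mul_one, Matrix.mul_zero, Matrix.zero_mul,
      add_zero, zero_add, zero_smul, exp_zero]
    rw [show (Matrix.diagonal fun i => Sg i i) = Sg from hSgdiag.diagonal_diag]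
    rw [hΔ, ← hSVD, Matrix.mul_assoc U V Vᵀ, hV₂, Matrix.mul_one, add_comm]
end

section
/- With U, U_⊥, A ∈ so(p), B ∈ ℝ^{(n−p)×p} as above and γ(t) = (U U_⊥) exp_m(t[[0,−Bᵀ],[B,0]]) [exp_m(tA); 0], the squared canonical norm of the velocity is constant in t: tr(γ′(t)ᵀ(I_n − ½γ(t)γ(t)ᵀ)γ′(t)) = ½·tr(AᵀA) + tr(BᵀB) for all t ∈ ℝ. -/
open Matrix NormedSpace

attribute [local instance] Matrix.frobeniusNormedAddCommGroup Matrix.frobeniusNormedSpace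

/-- The economy-size quasi-geodesic in lifted form. -/
noncomputable def econQG (n p : ℕ) (U : Matrix (Fin n) (Fin p) ℝ)
    (Uperp : Matrix (Fin n) (Fin (n - p)) ℝ)
    (A : Matrix (Fin p) (Fin p) ℝ) (B : Matrix (Fin (n - p)) (Fin p) ℝ) (t : ℝ) :
    Matrix (Fin n) (Fin p) ℝ :=
  fromCols U Uperp * exp (t • fromBlocks 0 (-Bᵀ) B 0) * fromRows (exp (t • A)) 0

/-- The orthogonal completion curve of the economy-size quasi-geodesic. -/
noncomputable def econQGperp (n p : ℕ) (U : Matrix (Fin n) (Fin p) ℝ)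
    (Uperp : Matrix (Fin n) (Fin (n - p)) ℝ)
    (A : Matrix (Fin p) (Fin p) ℝ) (B : Matrix (Fin (n - p)) (Fin p) ℝ) (t : ℝ) :
    Matrix (Fin n) (Fin (n - p)) ℝ :=
  fromCols U Uperp * exp (t • fromBlocks 0 (-Bᵀ) B 0) * fromRows 0 1


section PortAux
attribute [local instance] Matrix.frobeniusNormedRing Matrix.frobeniusNormedAlgebra
attribute [-instance] instTopologicalSpaceMatrix Matrix.instUniformSpace

section AuxMul

variable {l m k : Type*} [Fintype l] [Fintype m] [Fintype k]

/-- Matrix multiplication as a continuous bilinear map (aux). -/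
noncomputable def matMulCLM : Matrix l m ℝ →L[ℝ] Matrix m k ℝ →L[ℝ] Matrix l k ℝ :=
  LinearMap.toContinuousLinearMap
  { toFun := fun M => LinearMap.toContinuousLinearMap
      { toFun := fun N => M * N
        map_add' := fun N₁ N₂ => Matrix.mul_add M N₁ N₂
        map_smul' := fun c N => Matrix.mul_smul M c N }
    map_add' := fun M₁ M₂ => by
      ext N
      simp [Matrix.add_mul]
    map_smul' := fun c M => by
      ext N
      simp [Matrix.smul_mul] }

@[simp] lemma matMulCLM_apply (M : Matrix l m ℝ) (N : Matrix m k ℝ) :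
    matMulCLM M N = M * N := rfl

theorem HasDerivAt.matMul {f : ℝ → Matrix l m ℝ} {g : ℝ → Matrix m k ℝ}
    {f' : Matrix l m ℝ} {g' : Matrix m k ℝ} {t : ℝ}
    (hf : HasDerivAt f f' t) (hg : HasDerivAt g g' t) :
    HasDerivAt (fun u => f u * g u) (f' * g t + f t * g') t := by
  have h0 := ContinuousLinearMap.hasFDerivAt (𝕜 := ℝ)
    (matMulCLM (l := l) (m := m) (k := k)) (x := f t)
  have h1 := h0.comp_hasDerivAt t hf
  simpa [Function.comp] using h1.clm_apply hg

end AuxMul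

section AuxMain

variable {N P Q' : Type*} [Fintype N] [Fintype P] [Fintype Q'] [DecidableEq N] [DecidableEq P] [DecidableEq Q']

private lemma fromRows_add_aux (a : Matrix P P ℝ) (b : Matrix Q' P ℝ) :
    fromRows (0 : Matrix P P ℝ) b + fromRows a 0 = fromRows a b := by
  ext (i | i) j <;> simp

theorem aux_main (Qm : Matrix N (P ⊕ Q') ℝ) (A : Matrix P P ℝ) (B : Matrix Q' P ℝ)
    (hO₁ : Qmᵀ * Qm = 1) (hO₂ : Qm * Qmᵀ = 1) (hA : Aᵀ = -A) (t : ℝ) :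
    trace ((deriv (fun u : ℝ =>
          Qm * exp (u • fromBlocks 0 (-Bᵀ) B 0) * fromRows (exp (u • A)) (0 : Matrix Q' P ℝ)) t)ᵀ *
        ((1 : Matrix N N ℝ) -
          (1 / 2 : ℝ) • ((Qm * exp (t • fromBlocks 0 (-Bᵀ) B 0) * fromRows (exp (t • A)) (0 : Matrix Q' P ℝ)) *
            (Qm * exp (t • fromBlocks 0 (-Bᵀ) B 0) * fromRows (exp (t • A)) (0 : Matrix Q' P ℝ))ᵀ)) *
        deriv (fun u : ℝ =>
          Qm * exp (u • fromBlocks 0 (-Bᵀ) B 0) * fromRows (exp (u • A)) (0 : Matrix Q' P ℝ)) t) =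
      (1 / 2 : ℝ) * trace (Aᵀ * A) + trace (Bᵀ * B) := by
  set S : Matrix (P ⊕ Q') (P ⊕ Q') ℝ := fromBlocks 0 (-Bᵀ) B 0 with hSdef
  set R : Matrix (P ⊕ Q') P ℝ := fromRows 1 0 with hRdef
  set G : Matrix (P ⊕ Q') P ℝ := fromRows A B with hGdef
  set e : Matrix P P ℝ := exp (t • A) with hedef
  set X : Matrix (P ⊕ Q') (P ⊕ Q') ℝ := exp (t • S) with hXdef
  -- skewness and exponential identities
  have hSskew : Sᵀ = -S := by
    rw [hSdef, Matrix.fromBlocks_transpose]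
    ext (i | i) (j | j) <;> simp
  have heT : eᵀ = exp (-(t • A)) := by
    erw [hedef, ← Matrix.exp_transpose, Matrix.transpose_smul, hA, smul_neg]
    rfl
  have hXT : Xᵀ = exp (-(t • S)) := by
    erw [hXdef, ← Matrix.exp_transpose, Matrix.transpose_smul, hSskew, smul_neg]
    rfl
  have hee : e * eᵀ = 1 := by
    have h := Matrix.exp_add_of_commute (t • A) (-(t • A))
      ((Commute.refl (t • A)).neg_right)
    erw [hedef, heT, ← h, add_neg_cancel, exp_zero]
  have hXTX : Xᵀ * X = 1 := by
    have h := Matrix.exp_add_of_commute (-(t • S)) (t • S)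
      ((Commute.refl (t • S)).neg_left)
    erw [hXdef, hXT, ← h, neg_add_cancel, exp_zero]
  -- collapse helpers
  have hQc : ∀ M : Matrix (P ⊕ Q') P ℝ, Qmᵀ * (Qm * M) = M := fun M => by
    rw [← Matrix.mul_assoc, hO₁, Matrix.one_mul]
  have hXc : ∀ M : Matrix (P ⊕ Q') P ℝ, Xᵀ * (X * M) = M := fun M => by
    rw [← Matrix.mul_assoc, hXTX, Matrix.one_mul]
  have hec : ∀ M : Matrix P P ℝ, e * (eᵀ * M) = M := fun M => by
    rw [← Matrix.mul_assoc, hee, Matrix.one_mul]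
  -- the derivative
  have hcanc : X * S = S * X := (((Commute.refl S).smul_left t).exp_left).eq
  have hX' : HasDerivAt (fun u : ℝ => exp (u • S)) (S * X) t :=
    hasDerivAt_exp_smul_const' S t
  have he' : HasDerivAt (fun u : ℝ => exp (u • A)) (A * e) t :=
    hasDerivAt_exp_smul_const' A t
  have h1 : HasDerivAt (fun u : ℝ => Qm * exp (u • S)) (Qm * (S * X)) t := by
    simpa using (hasDerivAt_const t Qm).matMul hX'
  have h2 : HasDerivAt (fun u : ℝ => R * exp (u • A)) (R * (A * e)) t := by
    simpa using (hasDerivAt_const t R).matMul he'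
  have hfun : (fun u : ℝ => Qm * exp (u • S) * fromRows (exp (u • A)) (0 : Matrix Q' P ℝ)) =
      fun u : ℝ => (Qm * exp (u • S)) * (R * exp (u • A)) := by
    funext u
    rw [hRdef, Matrix.fromRows_mul, Matrix.one_mul, Matrix.zero_mul]
  have hγ : HasDerivAt (fun u : ℝ => Qm * exp (u • S) * fromRows (exp (u • A)) (0 : Matrix Q' P ℝ))
      ((Qm * (S * X)) * (R * e) + (Qm * X) * (R * (A * e))) t := by
    rw [hfun]; exact h1.matMul h2
  have hSR : S * R = fromRows 0 B := by
    rw [hSdef, hRdef, Matrix.fromBlocks_mul_fromRows]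
    simp
  have hRA : R * A = fromRows A 0 := by
    rw [hRdef, Matrix.fromRows_mul, Matrix.one_mul, Matrix.zero_mul]
  have hDval : (Qm * (S * X)) * (R * e) + (Qm * X) * (R * (A * e)) = Qm * (X * (G * e)) := by
    rw [← hcanc]
    calc (Qm * (X * S)) * (R * e) + (Qm * X) * (R * (A * e))
        = Qm * (X * ((S * R) * e)) + Qm * (X * ((R * A) * e)) := by
          simp only [Matrix.mul_assoc]
      _ = Qm * (X * ((S * R + R * A) * e)) := by
          rw [Matrix.add_mul, Matrix.mul_add, Matrix.mul_add]
      _ = Qm * (X * (G * e)) := by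
          rw [hSR, hRA, fromRows_add_aux, hGdef]
  have hD : deriv (fun u : ℝ => Qm * exp (u • S) * fromRows (exp (u • A)) (0 : Matrix Q' P ℝ)) t =
      Qm * (X * (G * e)) := by
    rw [hγ.deriv, hDval]
  rw [hD]
  have hγt : Qm * exp (t • S) * fromRows (exp (t • A)) (0 : Matrix Q' P ℝ) = Qm * (X * (R * e)) := by
    rw [hRdef, Matrix.fromRows_mul, Matrix.one_mul, Matrix.zero_mul, ← hedef, ← hXdef,
      Matrix.mul_assoc]
  rw [hγt]
  -- transposes of block matrices
  have hGT : Gᵀ = fromCols Aᵀ Bᵀ := by rw [hGdef, Matrix.transpose_fromRows]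
  have hRT : Rᵀ = fromCols 1 0 := by
    rw [hRdef, Matrix.transpose_fromRows, Matrix.transpose_one, Matrix.transpose_zero]
  have hGG : Gᵀ * G = Aᵀ * A + Bᵀ * B := by
    rw [hGT, hGdef, Matrix.fromCols_mul_fromRows]
  have hRG : Rᵀ * G = A := by
    rw [hRT, hGdef, Matrix.fromCols_mul_fromRows, Matrix.one_mul, Matrix.zero_mul, add_zero]
  have hGR : Gᵀ * R = Aᵀ := by
    rw [hGT, hRdef, Matrix.fromCols_mul_fromRows, Matrix.mul_one, Matrix.mul_zero, add_zero]
  -- expand the quadratic form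
  have key1 : trace ((Qm * (X * (G * e)))ᵀ * (Qm * (X * (G * e)))) =
      trace (Aᵀ * A) + trace (Bᵀ * B) := by
    simp only [Matrix.transpose_mul, Matrix.mul_assoc, hQc, hXc]
    rw [Matrix.trace_mul_comm]
    simp only [Matrix.mul_assoc]
    rw [hee, Matrix.mul_one, hGG, Matrix.trace_add]
  have key2 : trace ((Qm * (X * (G * e)))ᵀ *
      ((Qm * (X * (R * e))) * (Qm * (X * (R * e)))ᵀ) * (Qm * (X * (G * e)))) =
      trace (Aᵀ * A) := by
    simp only [Matrix.transpose_mul, Matrix.mul_assoc, hQc, hXc, hec]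
    rw [← Matrix.mul_assoc Rᵀ G e, hRG, ← Matrix.mul_assoc Gᵀ R, hGR]
    rw [Matrix.trace_mul_comm]
    simp only [Matrix.mul_assoc]
    rw [hee, Matrix.mul_one]
  rw [Matrix.mul_sub, Matrix.mul_one, Matrix.sub_mul, Matrix.trace_sub,
    Matrix.mul_smul, Matrix.smul_mul, Matrix.trace_smul, smul_eq_mul,
    key1]
  rw [show (Qm * (X * (G * e)))ᵀ * ((Qm * (X * (R * e))) * (Qm * (X * (R * e)))ᵀ) *
      (Qm * (X * (G * e))) = (Qm * (X * (G * e)))ᵀ *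
      ((Qm * (X * (R * e))) * (Qm * (X * (R * e)))ᵀ) * (Qm * (X * (G * e))) from rfl] at key2
  rw [key2]
  ring

end AuxMain

end PortAux

/-- the quasi-geodesic `γ` has constant speed w.r.t. the canonical metric:
`tr(γ′(t)ᵀ(I − ½γ(t)γ(t)ᵀ)γ′(t)) = ½ tr(AᵀA) + tr(BᵀB)`. -/
theorem stmt5 (n p : ℕ) (U : Matrix (Fin n) (Fin p) ℝ)
    (Uperp : Matrix (Fin n) (Fin (n - p)) ℝ)
    (A : Matrix (Fin p) (Fin p) ℝ) (B : Matrix (Fin (n - p)) (Fin p) ℝ)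
    (hU : Uᵀ * U = 1)
    (hO₁ : (fromCols U Uperp)ᵀ * fromCols U Uperp = 1)
    (hO₂ : fromCols U Uperp * (fromCols U Uperp)ᵀ = 1)
    (hA : Aᵀ = -A) :
    ∀ t : ℝ,
      trace ((deriv (econQG n p U Uperp A B) t)ᵀ *
          ((1 : Matrix (Fin n) (Fin n) ℝ) -
            (1 / 2 : ℝ) • (econQG n p U Uperp A B t * (econQG n p U Uperp A B t)ᵀ)) *
          deriv (econQG n p U Uperp A B) t) =
        (1 / 2 : ℝ) * trace (Aᵀ * A) + trace (Bᵀ * B) := by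
  intro t
  have hfun : econQG n p U Uperp A B = fun u : ℝ =>
      fromCols U Uperp * exp (u • fromBlocks 0 (-Bᵀ) B 0) *
        fromRows (exp (u • A)) (0 : Matrix (Fin (n - p)) (Fin p) ℝ) := rfl
  rw [hfun]
  exact aux_main (fromCols U Uperp) A B hO₁ hO₂ hA t
end

section
/- With U, U_⊥, A ∈ so(p), B ∈ ℝ^{(n−p)×p} as above, γ(t) = (U U_⊥) exp_m(t[[0,−Bᵀ],[B,0]]) [exp_m(tA); 0] and γ_⊥(t) = (U U_⊥) exp_m(t[[0,−Bᵀ],[B,0]]) [0; I_{n−p}], the second derivative satisfies γ″(t) = γ(t)(A² − exp_m(tAᵀ)BᵀB exp_m(tA)) + 2γ_⊥(t)BA exp_m(tA) for all t ∈ ℝ. -/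
open Matrix NormedSpace

attribute [local instance] Matrix.frobeniusNormedAddCommGroup Matrix.frobeniusNormedSpace

attribute [local instance] Matrix.frobeniusNormedRing Matrix.frobeniusNormedAlgebra

section aux
variable {l m k : Type*} [Fintype l] [Fintype m] [Fintype k]

/-- Matrix multiplication as a continuous bilinear map (Frobenius norm). -/
noncomputable def mulCLM : Matrix l m ℝ →L[ℝ] Matrix m k ℝ →L[ℝ] Matrix l k ℝ :=
  LinearMap.mkContinuous₂
    (LinearMap.mk₂ ℝ (HMul.hMul) Matrix.add_mul (fun c M N => Matrix.smul_mul c M N)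
      Matrix.mul_add (fun c M N => Matrix.mul_smul M c N))
    1 (fun M N => by simpa using Matrix.frobenius_norm_mul M N)

@[simp] lemma mulCLM_apply (M : Matrix l m ℝ) (N : Matrix m k ℝ) : mulCLM M N = M * N := rfl

theorem HasDerivAt.mmul {f : ℝ → Matrix l m ℝ} {g : ℝ → Matrix m k ℝ}
    {f' : Matrix l m ℝ} {g' : Matrix m k ℝ} {t : ℝ}
    (hf : HasDerivAt f f' t) (hg : HasDerivAt g g' t) :
    HasDerivAt (fun s => f s * g s) (f' * g t + f t * g') t := by
  have h := ((mulCLM (l := l) (m := m) (k := k)).isBoundedBilinearMap.hasFDerivAt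
    (f t, g t)).comp_hasDerivAt t (hf.prodMk hg)
  simp only [Function.comp_def, IsBoundedBilinearMap.deriv_apply, mulCLM_apply] at h
  exact h.congr_deriv (add_comm _ _)

theorem HasDerivAt.const_mmul {g : ℝ → Matrix m k ℝ} {g' : Matrix m k ℝ} {t : ℝ}
    (C : Matrix l m ℝ) (hg : HasDerivAt g g' t) :
    HasDerivAt (fun s => C * g s) (C * g') t := by
  simpa using (hasDerivAt_const t C).mmul hg

theorem HasDerivAt.mmul_const {f : ℝ → Matrix l m ℝ} {f' : Matrix l m ℝ} {t : ℝ}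
    (hf : HasDerivAt f f' t) (C : Matrix m k ℝ) :
    HasDerivAt (fun s => f s * C) (f' * C) t := by
  simpa using hf.mmul (hasDerivAt_const t C)

lemma fromRows_add {R : Type*} [AddCommMonoid R] {m₁ m₂ n : Type*}
    (A₁ C₁ : Matrix m₁ n R) (A₂ C₂ : Matrix m₂ n R) :
    fromRows A₁ A₂ + fromRows C₁ C₂ = fromRows (A₁ + C₁) (A₂ + C₂) := by
  ext (i | i) j <;> simp [Matrix.fromRows_apply_inl, Matrix.fromRows_apply_inr]

end aux

/-- the second derivative of the economy-size quasi-geodesic satisfies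
`γ″(t) = γ(t)(A² − exp_m(tAᵀ)BᵀB exp_m(tA)) + 2 γ⊥(t) B A exp_m(tA)`. -/
theorem stmt6 (n p : ℕ) (U : Matrix (Fin n) (Fin p) ℝ)
    (Uperp : Matrix (Fin n) (Fin (n - p)) ℝ)
    (A : Matrix (Fin p) (Fin p) ℝ) (B : Matrix (Fin (n - p)) (Fin p) ℝ)
    (hU : Uᵀ * U = 1)
    (hO₁ : (fromCols U Uperp)ᵀ * fromCols U Uperp = 1)
    (hO₂ : fromCols U Uperp * (fromCols U Uperp)ᵀ = 1)
    (hA : Aᵀ = -A) :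
    ∀ t : ℝ,
      deriv (deriv (econQG n p U Uperp A B)) t =
        econQG n p U Uperp A B t * (A ^ 2 - exp (t • Aᵀ) * Bᵀ * B * exp (t • A)) +
          (2 : ℝ) • (econQGperp n p U Uperp A B t * B * A * exp (t • A)) := by
  intro t
  set Q : Matrix (Fin n) (Fin p ⊕ Fin (n - p)) ℝ := fromCols U Uperp with hQ
  set X : Matrix (Fin p ⊕ Fin (n - p)) (Fin p ⊕ Fin (n - p)) ℝ :=
    fromBlocks 0 (-Bᵀ) B 0 with hX
  set F : Matrix (Fin p ⊕ Fin (n - p)) (Fin p) ℝ := fromRows 1 0 with hF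
  have hE : ∀ s : ℝ, HasDerivAt (fun u : ℝ => exp (u • X)) (X * exp (s • X)) s :=
    fun s => hasDerivAt_exp_smul_const' X s
  have he : ∀ s : ℝ, HasDerivAt (fun u : ℝ => exp (u • A)) (exp (s • A) * A) s :=
    fun s => hasDerivAt_exp_smul_const A s
  have key : ∀ s : ℝ, econQG n p U Uperp A B s
      = (Q * exp (s • X)) * (F * exp (s • A)) := by
    intro s
    rw [econQG, ← hQ, ← hX]
    rw [hF, Matrix.fromRows_mul, Matrix.one_mul, Matrix.zero_mul]
    rfl
  -- first derivative
  have hD1 : ∀ s : ℝ, HasDerivAt (econQG n p U Uperp A B)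
      ((Q * (X * exp (s • X))) * (F * exp (s • A))
        + (Q * exp (s • X)) * (F * (exp (s • A) * A))) s := by
    intro s
    have h := (HasDerivAt.const_mmul Q (hE s)).mmul (HasDerivAt.const_mmul F (he s))
    exact h.congr_of_eventuallyEq (Filter.Eventually.of_forall key)
  have hderiv1 : deriv (econQG n p U Uperp A B) = fun s =>
      (Q * (X * exp (s • X))) * (F * exp (s • A))
        + (Q * exp (s • X)) * (F * (exp (s • A) * A)) :=
    funext fun s => (hD1 s).deriv
  -- second derivative
  have hD2 : HasDerivAt (fun s =>
      (Q * (X * exp (s • X))) * (F * exp (s • A))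
        + (Q * exp (s • X)) * (F * (exp (s • A) * A)))
      (((Q * (X * (X * exp (t • X)))) * (F * exp (t • A))
          + (Q * (X * exp (t • X))) * (F * (exp (t • A) * A)))
        + ((Q * (X * exp (t • X))) * (F * (exp (t • A) * A))
          + (Q * exp (t • X)) * (F * (exp (t • A) * A * A)))) t := by
    have h1 := (HasDerivAt.const_mmul Q (HasDerivAt.const_mmul X (hE t))).mmul
      (HasDerivAt.const_mmul F (he t))
    have h2 := (HasDerivAt.const_mmul Q (hE t)).mmul
      (HasDerivAt.const_mmul F ((he t).mmul_const A))
    exact h1.add h2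
  rw [hderiv1]
  refine hD2.deriv.trans ?_
  -- now pure matrix algebra
  have hXE : X * exp (t • X) = exp (t • X) * X :=
    (((Commute.refl X).smul_right t).exp_right).eq
  have hAe : A * exp (t • A) = exp (t • A) * A :=
    (((Commute.refl A).smul_right t).exp_right).eq
  have heT : exp (t • A) * exp (t • Aᵀ) = 1 := by
    rw [hA, smul_neg]
    exact (exp_add_of_commute ((Commute.refl (t • A)).neg_right)).symm.trans
      (by rw [add_neg_cancel, exp_zero])
  have swap : ∀ M : Matrix (Fin p ⊕ Fin (n - p)) (Fin p) ℝ,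
      X * (exp (t • X) * M) = exp (t • X) * (X * M) := by
    intro M
    rw [← Matrix.mul_assoc, hXE, Matrix.mul_assoc]
  rw [key t, show econQGperp n p U Uperp A B t * B * A * exp (t • A) =
      Q * ((exp (t • X) : Matrix (Fin p ⊕ Fin (n - p)) (Fin p ⊕ Fin (n - p)) ℝ) *
        ((fromRows 0 1 : Matrix (Fin p ⊕ Fin (n - p)) (Fin (n - p)) ℝ) *
        (B * (A * (exp (t • A) : Matrix (Fin p) (Fin p) ℝ)))) : Matrix (Fin p ⊕ Fin (n - p)) (Fin p) ℝ) by
    change Q * (exp (t • X) : Matrix (Fin p ⊕ Fin (n - p)) (Fin p ⊕ Fin (n - p)) ℝ) *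
      (fromRows 0 1 : Matrix (Fin p ⊕ Fin (n - p)) (Fin (n - p)) ℝ) * B * A *
      (exp (t • A) : Matrix (Fin p) (Fin p) ℝ) = _
    simp only [Matrix.mul_assoc]]
  simp only [Matrix.mul_assoc]
  simp only [swap]
  set E : Matrix (Fin p ⊕ Fin (n - p)) (Fin p ⊕ Fin (n - p)) ℝ := exp (t • X) with hEe
  set e : Matrix (Fin p) (Fin p) ℝ := exp (t • A) with hee
  have h5 : e * (NormedSpace.exp (t • Aᵀ) * (Bᵀ * (B * e))) = Bᵀ * (B * e) := by
    rw [← Matrix.mul_assoc, heT, Matrix.one_mul]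
  simp only [hF, hX, Matrix.fromRows_mul, Matrix.fromBlocks_mul_fromRows, Matrix.one_mul,
    Matrix.zero_mul, Matrix.mul_zero, add_zero, zero_add, Matrix.neg_mul]
  have r1 : fromRows (e * (A ^ 2 - NormedSpace.exp (t • Aᵀ) * (Bᵀ * (B * e))))
        (0 : Matrix (Fin (n - p)) (Fin p) ℝ)
      = fromRows (e * (A * A)) 0 + fromRows (-(Bᵀ * (B * e))) 0 := by
    rw [fromRows_add, add_zero]
    rw [Matrix.mul_sub, h5, sub_eq_add_neg, pow_two]
  have r2 : B * (A * e) = B * (e * A) := by rw [hAe]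
  rw [r1, r2]
  simp only [Matrix.mul_add, two_smul]
  abel
end

section
/- With U, U_⊥, A ∈ so(p), B ∈ ℝ^{(n−p)×p} and γ(t) = (U U_⊥) exp_m(t[[0,−Bᵀ],[B,0]]) [exp_m(tA); 0] as above, the squared canonical norm of the covariant acceleration is constant in t: tr((D_tγ′(t))ᵀ(I_n − ½γ(t)γ(t)ᵀ)(D_tγ′(t))) = ‖BA‖_F² for all t ∈ ℝ, where D_tγ′(t) = γ″(t) + γ′(t)γ′(t)ᵀγ(t) + γ(t)((γ(t)ᵀγ′(t))² + γ′(t)ᵀγ′(t)) and ‖·‖_F is the Frobenius norm. -/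
open Matrix NormedSpace

attribute [local instance] Matrix.frobeniusNormedAddCommGroup Matrix.frobeniusNormedSpace

section Helpers

variable {k p q s : Type*} [Fintype k] [DecidableEq k] [Fintype p] [Fintype q] [Fintype s]
  [DecidableEq p] [DecidableEq q]

lemma fromRows_add' {p q k : Type*} (a b : Matrix p k ℝ) (c d : Matrix q k ℝ) :
    fromRows a c + fromRows b d = fromRows (a + b) (c + d) := by
  ext (i | i) j <;> simp

/-- The block-diagonal embedding as a linear map (for continuity). -/
noncomputable def bdLin (p q : Type*) [Fintype p] [Fintype q] [DecidableEq p] [DecidableEq q] :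
    (Matrix p p ℝ × Matrix q q ℝ) →ₗ[ℝ] Matrix (p ⊕ q) (p ⊕ q) ℝ where
  toFun x := fromBlocks x.1 0 0 x.2
  map_add' x y := by simp [fromBlocks_add]
  map_smul' c x := by simp [fromBlocks_smul]

/-- The block-diagonal embedding as a ring homomorphism. -/
noncomputable def bdHom (p q : Type*) [Fintype p] [Fintype q] [DecidableEq p] [DecidableEq q] :
    (Matrix p p ℝ × Matrix q q ℝ) →+* Matrix (p ⊕ q) (p ⊕ q) ℝ where
  toFun x := fromBlocks x.1 0 0 x.2
  map_one' := by simp [fromBlocks_one]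
  map_mul' x y := by simp [fromBlocks_multiply]
  map_zero' := by simp
  map_add' x y := by simp [fromBlocks_add]

/-- The matrix exponential of a block-diagonal matrix is block-diagonal. -/
lemma exp_fromBlocks_diag (M : Matrix p p ℝ) (N : Matrix q q ℝ) :
    exp (fromBlocks M 0 0 N) = fromBlocks (exp M) 0 0 (exp N) := by
  letI : NormedRing (Matrix p p ℝ) := Matrix.frobeniusNormedRing
  letI : NormedRing (Matrix q q ℝ) := Matrix.frobeniusNormedRing
  letI : NormedRing (Matrix (p ⊕ q) (p ⊕ q) ℝ) := Matrix.frobeniusNormedRing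
  letI : NormedAlgebra ℚ (Matrix p p ℝ) := Matrix.frobeniusNormedAlgebra
  letI : NormedAlgebra ℚ (Matrix q q ℝ) := Matrix.frobeniusNormedAlgebra
  letI : NormedAlgebra ℚ (Matrix (p ⊕ q) (p ⊕ q) ℝ) := Matrix.frobeniusNormedAlgebra
  have h := map_exp (bdHom p q) ((bdLin p q).continuous_of_finiteDimensional) (M, N)
  have h2 : exp ((M, N) : Matrix p p ℝ × Matrix q q ℝ) = (exp M, exp N) :=
    Prod.ext (Prod.fst_exp (M, N)) (Prod.snd_exp (M, N))
  erw [h2] at h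
  exact h.symm

/-- `M ↦ Q * M * R` as a continuous linear map. -/
noncomputable def sandL (Q : Matrix k p ℝ) (R : Matrix p s ℝ) :
    Matrix p p ℝ →L[ℝ] Matrix k s ℝ :=
  LinearMap.toContinuousLinearMap
    { toFun := fun M => Q * M * R
      map_add' := fun a b => by simp [Matrix.add_mul, Matrix.mul_add]
      map_smul' := fun c a => by simp [Matrix.smul_mul, Matrix.mul_smul] }

@[simp] lemma sandL_apply (Q : Matrix k p ℝ) (R : Matrix p s ℝ) (M : Matrix p p ℝ) :
    sandL Q R M = Q * M * R := rfl

/-- The exponential of a skew-symmetric real matrix is orthogonal. -/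
lemma exp_skew_orth (X : Matrix p p ℝ) (hX : Xᵀ = -X) :
    (exp X)ᵀ * exp X = 1 ∧ exp X * (exp X)ᵀ = 1 := by
  have h1 : (exp X)ᵀ = exp (-X) := by rw [← Matrix.exp_transpose, hX]
  have hc : Commute (-X) X := (Commute.refl X).neg_left
  constructor
  · rw [h1, ← Matrix.exp_add_of_commute _ _ hc]; simp
  · rw [h1, ← Matrix.exp_add_of_commute _ _ hc.symm]; simp

/-- The squared Frobenius norm is the trace of `Mᵀ * M`. -/
lemma frob_sq (M : Matrix p q ℝ) : ‖M‖ ^ 2 = trace (Mᵀ * M) := by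
  rw [Matrix.frobenius_norm_def, ← Real.rpow_natCast (_ ^ (1/2 : ℝ)) 2,
    ← Real.rpow_mul (by positivity)]
  norm_num
  rw [Matrix.trace]
  simp only [Matrix.diag_apply, Matrix.mul_apply, Matrix.transpose_apply]
  rw [Finset.sum_comm]
  congr 1; funext i; congr 1; funext j
  simp [Real.norm_eq_abs, sq_abs, sq]

lemma metric_trace (G D : Matrix k p ℝ) (hGD : Gᵀ * D = 0) :
    trace (Dᵀ * ((1 : Matrix k k ℝ) - (1 / 2 : ℝ) • (G * Gᵀ)) * D) = trace (Dᵀ * D) := by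
  have hDG : Dᵀ * G = 0 := by
    have h := congrArg Matrix.transpose hGD
    rwa [Matrix.transpose_mul, Matrix.transpose_transpose, Matrix.transpose_zero] at h
  rw [Matrix.mul_sub, Matrix.mul_one, Matrix.sub_mul, Matrix.mul_smul, Matrix.smul_mul,
    ← Matrix.mul_assoc Dᵀ G Gᵀ, hDG, Matrix.zero_mul, Matrix.zero_mul, smul_zero, sub_zero]

/-- The main abstract computation: the squared canonical norm of the covariant acceleration. -/
lemma core_calc (P : Matrix k (p ⊕ q) ℝ) (hP : Pᵀ * P = 1)
    (f A : Matrix p p ℝ) (B : Matrix q p ℝ)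
    (hf : fᵀ * f = 1) (hf' : f * fᵀ = 1) (hA : Aᵀ = -A) (hc : f * A = A * f) :
    trace
      ((P * fromRows (-(Bᵀ * (B * f)) + f * (A * A)) (B * (f * A) + B * (f * A)) +
          (P * fromRows (f * A) (B * f)) * (P * fromRows (f * A) (B * f))ᵀ *
            (P * fromRows f (0 : Matrix q p ℝ)) +
          (P * fromRows f (0 : Matrix q p ℝ)) *
            (((P * fromRows f (0 : Matrix q p ℝ))ᵀ * (P * fromRows (f * A) (B * f))) ^ 2 +
              (P * fromRows (f * A) (B * f))ᵀ * (P * fromRows (f * A) (B * f))))ᵀ *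
        ((1 : Matrix k k ℝ) -
          (1 / 2 : ℝ) • ((P * fromRows f (0 : Matrix q p ℝ)) * (P * fromRows f (0 : Matrix q p ℝ))ᵀ)) *
        (P * fromRows (-(Bᵀ * (B * f)) + f * (A * A)) (B * (f * A) + B * (f * A)) +
          (P * fromRows (f * A) (B * f)) * (P * fromRows (f * A) (B * f))ᵀ *
            (P * fromRows f (0 : Matrix q p ℝ)) +
          (P * fromRows f (0 : Matrix q p ℝ)) *
            (((P * fromRows f (0 : Matrix q p ℝ))ᵀ * (P * fromRows (f * A) (B * f))) ^ 2 +
              (P * fromRows (f * A) (B * f))ᵀ * (P * fromRows (f * A) (B * f))))) =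
      trace ((B * A)ᵀ * (B * A)) := by
  have hmul : ∀ (g g' : Matrix p p ℝ) (h h' : Matrix q p ℝ),
      (P * fromRows g h)ᵀ * (P * fromRows g' h') = gᵀ * g' + hᵀ * h' := by
    intro g g' h h'
    rw [Matrix.transpose_mul, Matrix.mul_assoc, ← Matrix.mul_assoc Pᵀ P, hP, Matrix.one_mul,
      Matrix.transpose_fromRows, Matrix.fromCols_mul_fromRows]
  have h01 : (P * fromRows f (0 : Matrix q p ℝ))ᵀ * (P * fromRows (f * A) (B * f)) = A := by
    rw [hmul, ← Matrix.mul_assoc, hf, Matrix.one_mul, Matrix.transpose_zero, Matrix.zero_mul,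
      add_zero]
  have h10 : (P * fromRows (f * A) (B * f))ᵀ * (P * fromRows f (0 : Matrix q p ℝ)) = -A := by
    rw [hmul, Matrix.mul_zero, add_zero, Matrix.transpose_mul, Matrix.mul_assoc, hf,
      Matrix.mul_one, hA]
  have h11 : (P * fromRows (f * A) (B * f))ᵀ * (P * fromRows (f * A) (B * f)) =
      -(A * A) + (B * f)ᵀ * (B * f) := by
    rw [hmul]
    congr 1
    rw [Matrix.transpose_mul, Matrix.mul_assoc, ← Matrix.mul_assoc fᵀ f, hf, Matrix.one_mul,
      hA, Matrix.neg_mul]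
  have hD : P * fromRows (-(Bᵀ * (B * f)) + f * (A * A)) (B * (f * A) + B * (f * A)) +
      (P * fromRows (f * A) (B * f)) * (P * fromRows (f * A) (B * f))ᵀ *
        (P * fromRows f (0 : Matrix q p ℝ)) +
      (P * fromRows f (0 : Matrix q p ℝ)) *
        (((P * fromRows f (0 : Matrix q p ℝ))ᵀ * (P * fromRows (f * A) (B * f))) ^ 2 +
          (P * fromRows (f * A) (B * f))ᵀ * (P * fromRows (f * A) (B * f))) =
      P * fromRows (0 : Matrix p p ℝ) (B * (f * A)) := by
    rw [Matrix.mul_assoc _ _ (P * fromRows f (0 : Matrix q p ℝ)), h10, h01, h11]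
    have e2 : (P * fromRows (f * A) (B * f)) * (-A) =
        P * fromRows (-(f * (A * A))) (-(B * (f * A))) := by
      rw [Matrix.mul_assoc, Matrix.fromRows_mul, Matrix.mul_neg, Matrix.mul_neg,
        Matrix.mul_assoc f A A, Matrix.mul_assoc B f A]
    have e3 : A ^ 2 + (-(A * A) + (B * f)ᵀ * (B * f)) = (B * f)ᵀ * (B * f) := by
      rw [sq]; abel
    rw [e2, e3]
    have e4b : f * ((B * f)ᵀ * (B * f)) = Bᵀ * (B * f) := by
      rw [Matrix.transpose_mul, ← Matrix.mul_assoc f (fᵀ * Bᵀ) (B * f),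
        ← Matrix.mul_assoc f fᵀ Bᵀ, hf', Matrix.one_mul]
    have e4 : (P * fromRows f (0 : Matrix q p ℝ)) * ((B * f)ᵀ * (B * f)) =
        P * fromRows (Bᵀ * (B * f)) (0 : Matrix q p ℝ) := by
      rw [Matrix.mul_assoc, Matrix.fromRows_mul, Matrix.zero_mul, e4b]
    rw [e4, ← Matrix.mul_add, ← Matrix.mul_add, fromRows_add', fromRows_add']
    congr 1
    ext (i | i) j <;>
      simp [Matrix.add_apply, Matrix.neg_apply] <;> ring
  have hG0D : (P * fromRows f (0 : Matrix q p ℝ))ᵀ *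
      (P * fromRows (0 : Matrix p p ℝ) (B * (f * A))) = 0 := by
    rw [hmul, Matrix.mul_zero, Matrix.transpose_zero, Matrix.zero_mul, add_zero]
  have hDD : (P * fromRows (0 : Matrix p p ℝ) (B * (f * A)))ᵀ *
      (P * fromRows (0 : Matrix p p ℝ) (B * (f * A))) =
      (B * (f * A))ᵀ * (B * (f * A)) := by
    rw [hmul, Matrix.transpose_zero, Matrix.zero_mul, zero_add]
  rw [hD, metric_trace _ _ hG0D, hDD]
  have hBfA : B * (f * A) = (B * A) * f := by rw [hc, ← Matrix.mul_assoc]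
  rw [hBfA, Matrix.transpose_mul, Matrix.mul_assoc, Matrix.trace_mul_comm,
    Matrix.mul_assoc, Matrix.mul_assoc, hf', Matrix.mul_one]

end Helpers

section Derivs

variable {n p : ℕ} (U : Matrix (Fin n) (Fin p) ℝ) (Uperp : Matrix (Fin n) (Fin (n - p)) ℝ)
  (A : Matrix (Fin p) (Fin p) ℝ) (B : Matrix (Fin (n - p)) (Fin p) ℝ)

local notation "X" => fromBlocks (0 : Matrix (Fin p) (Fin p) ℝ) (-Bᵀ) B
  (0 : Matrix (Fin (n-p)) (Fin (n-p)) ℝ)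
local notation "Y" => fromBlocks A (0 : Matrix (Fin p) (Fin (n-p)) ℝ)
  (0 : Matrix (Fin (n-p)) (Fin p) ℝ) (0 : Matrix (Fin (n-p)) (Fin (n-p)) ℝ)
local notation "R" => fromRows (1 : Matrix (Fin p) (Fin p) ℝ)
  (0 : Matrix (Fin (n-p)) (Fin p) ℝ)
local notation "QQ" => fromCols U Uperp

lemma expY_eq (s : ℝ) :
    exp (s • Y) = fromBlocks (exp (s • A)) 0 0 1 := by
  have : s • Y = fromBlocks (s • A) 0 0 (0 : Matrix (Fin (n-p)) (Fin (n-p)) ℝ) := by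
    simp [fromBlocks_smul]
  rw [this, exp_fromBlocks_diag, exp_zero]

lemma expY_mul_R (s : ℝ) :
    exp (s • Y) * R = fromRows (exp (s • A)) 0 := by
  rw [expY_eq, fromBlocks_mul_fromRows]
  simp

lemma econQG_eq : econQG n p U Uperp A B =
    fun u : ℝ => sandL QQ R (exp (u • X) * exp (u • Y)) := by
  funext u
  rw [econQG, sandL_apply]
  show QQ * exp (u • X) * fromRows (exp (u • A)) (0 : Matrix (Fin (n-p)) (Fin p) ℝ) = _
  simp only [Matrix.mul_assoc]
  rw [expY_mul_R]

lemma hasDeriv_econQG (t : ℝ) :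
    HasDerivAt (econQG n p U Uperp A B)
      (sandL QQ R ((exp (t • X) * X) * exp (t • Y) +
        exp (t • X) * (exp (t • Y) * Y))) t := by
  rw [econQG_eq]
  letI : NormedRing (Matrix (Fin p ⊕ Fin (n-p)) (Fin p ⊕ Fin (n-p)) ℝ) := Matrix.frobeniusNormedRing
  letI : NormedAlgebra ℝ (Matrix (Fin p ⊕ Fin (n-p)) (Fin p ⊕ Fin (n-p)) ℝ) :=
    Matrix.frobeniusNormedAlgebra
  exact (sandL QQ R).hasFDerivAt.comp_hasDerivAt t
    ((hasDerivAt_exp_smul_const X t).mul (hasDerivAt_exp_smul_const Y t))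

lemma deriv_econQG : deriv (econQG n p U Uperp A B) =
    fun s : ℝ => sandL QQ R ((exp (s • X) * X) * exp (s • Y) +
      exp (s • X) * (exp (s • Y) * Y)) :=
  funext fun s => (hasDeriv_econQG U Uperp A B s).deriv

lemma deriv2_econQG (t : ℝ) :
    deriv (deriv (econQG n p U Uperp A B)) t =
      sandL QQ R
        ((((exp (t • X) * X) * X) * exp (t • Y) +
            (exp (t • X) * X) * (exp (t • Y) * Y)) +
          ((exp (t • X) * X) * (exp (t • Y) * Y) +
            exp (t • X) * ((exp (t • Y) * Y) * Y))) := by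
  rw [deriv_econQG]
  refine HasDerivAt.deriv ?_
  letI : NormedRing (Matrix (Fin p ⊕ Fin (n-p)) (Fin p ⊕ Fin (n-p)) ℝ) := Matrix.frobeniusNormedRing
  letI : NormedAlgebra ℝ (Matrix (Fin p ⊕ Fin (n-p)) (Fin p ⊕ Fin (n-p)) ℝ) :=
    Matrix.frobeniusNormedAlgebra
  exact (sandL QQ R).hasFDerivAt.comp_hasDerivAt t
    ((((hasDerivAt_exp_smul_const X t).mul_const X).mul (hasDerivAt_exp_smul_const Y t)).add
      ((hasDerivAt_exp_smul_const X t).mul ((hasDerivAt_exp_smul_const Y t).mul_const Y)))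

lemma X_mul_rows (g : Matrix (Fin p) (Fin p) ℝ) (h : Matrix (Fin (n-p)) (Fin p) ℝ) :
    X * fromRows g h = fromRows (-(Bᵀ * h)) (B * g) := by
  rw [fromBlocks_mul_fromRows]; simp

lemma Y_mul_rows (g : Matrix (Fin p) (Fin p) ℝ) (h : Matrix (Fin (n-p)) (Fin p) ℝ) :
    Y * fromRows g h = fromRows (A * g) 0 := by
  rw [fromBlocks_mul_fromRows]; simp

lemma expY_mul_rows (t : ℝ) (g : Matrix (Fin p) (Fin p) ℝ) (h : Matrix (Fin (n-p)) (Fin p) ℝ) :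
    exp (t • Y) * fromRows g h = fromRows (exp (t • A) * g) h := by
  rw [expY_eq, fromBlocks_mul_fromRows]; simp

lemma econQG_t (t : ℝ) : econQG n p U Uperp A B t =
    (QQ * exp (t • X)) * fromRows (exp (t • A)) (0 : Matrix (Fin (n-p)) (Fin p) ℝ) := by
  rw [econQG]
  rfl

lemma d1_t (t : ℝ) : deriv (econQG n p U Uperp A B) t =
    (QQ * exp (t • X)) * fromRows (exp (t • A) * A) (B * exp (t • A)) := by
  rw [deriv_econQG]
  simp only [sandL_apply]
  simp only [Matrix.add_mul, Matrix.mul_assoc]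
  rw [expY_mul_R, X_mul_rows, Matrix.mul_zero, neg_zero]
  have hYR : (Y : Matrix (Fin p ⊕ Fin (n-p)) (Fin p ⊕ Fin (n-p)) ℝ) * R
      = fromRows A (0 : Matrix (Fin (n-p)) (Fin p) ℝ) := by
    rw [fromBlocks_mul_fromRows]; simp
  rw [hYR, expY_mul_rows, ← Matrix.mul_add, fromRows_add', zero_add, add_zero]

lemma d2_t (t : ℝ) : deriv (deriv (econQG n p U Uperp A B)) t =
    (QQ * exp (t • X)) * fromRows
      (-(Bᵀ * (B * exp (t • A))) + exp (t • A) * (A * A))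
      (B * (exp (t • A) * A) + B * (exp (t • A) * A)) := by
  rw [deriv2_econQG]
  simp only [sandL_apply]
  simp only [Matrix.add_mul, Matrix.mul_assoc]
  have hYR : (Y : Matrix (Fin p ⊕ Fin (n-p)) (Fin p ⊕ Fin (n-p)) ℝ) * R
      = fromRows A (0 : Matrix (Fin (n-p)) (Fin p) ℝ) := by
    rw [fromBlocks_mul_fromRows]; simp
  simp only [expY_mul_R, hYR, Y_mul_rows, expY_mul_rows, X_mul_rows,
    Matrix.mul_zero, neg_zero, Matrix.mul_one]
  conv_lhs => simp only [← Matrix.mul_add, fromRows_add', zero_add, add_zero]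
  simp only [Matrix.mul_add]

end Derivs

/-- the squared canonical norm of the covariant acceleration of the
economy-size quasi-geodesic is constant, equal to the squared Frobenius norm `‖BA‖_F²`. -/
theorem stmt8 (n p : ℕ) (U : Matrix (Fin n) (Fin p) ℝ)
    (Uperp : Matrix (Fin n) (Fin (n - p)) ℝ)
    (A : Matrix (Fin p) (Fin p) ℝ) (B : Matrix (Fin (n - p)) (Fin p) ℝ)
    (hU : Uᵀ * U = 1)
    (hO₁ : (fromCols U Uperp)ᵀ * fromCols U Uperp = 1)
    (hO₂ : fromCols U Uperp * (fromCols U Uperp)ᵀ = 1)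
    (hA : Aᵀ = -A) :
    ∀ t : ℝ,
      trace
        ((deriv (deriv (econQG n p U Uperp A B)) t +
            deriv (econQG n p U Uperp A B) t * (deriv (econQG n p U Uperp A B) t)ᵀ *
              econQG n p U Uperp A B t +
            econQG n p U Uperp A B t *
              (((econQG n p U Uperp A B t)ᵀ * deriv (econQG n p U Uperp A B) t) ^ 2 +
                (deriv (econQG n p U Uperp A B) t)ᵀ * deriv (econQG n p U Uperp A B) t))ᵀ *
          ((1 : Matrix (Fin n) (Fin n) ℝ) -
            (1 / 2 : ℝ) • (econQG n p U Uperp A B t * (econQG n p U Uperp A B t)ᵀ)) *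
          (deriv (deriv (econQG n p U Uperp A B)) t +
            deriv (econQG n p U Uperp A B) t * (deriv (econQG n p U Uperp A B) t)ᵀ *
              econQG n p U Uperp A B t +
            econQG n p U Uperp A B t *
              (((econQG n p U Uperp A B t)ᵀ * deriv (econQG n p U Uperp A B) t) ^ 2 +
                (deriv (econQG n p U Uperp A B) t)ᵀ * deriv (econQG n p U Uperp A B) t))) =
        ‖B * A‖ ^ 2 := by
  intro t
  have hXskew : (fromBlocks (0 : Matrix (Fin p) (Fin p) ℝ) (-Bᵀ) B
      (0 : Matrix (Fin (n-p)) (Fin (n-p)) ℝ))ᵀ =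
      -(fromBlocks (0 : Matrix (Fin p) (Fin p) ℝ) (-Bᵀ) B
        (0 : Matrix (Fin (n-p)) (Fin (n-p)) ℝ)) := by
    rw [fromBlocks_transpose]
    ext (i | i) (j | j) <;> simp
  have htX : (t • fromBlocks (0 : Matrix (Fin p) (Fin p) ℝ) (-Bᵀ) B
      (0 : Matrix (Fin (n-p)) (Fin (n-p)) ℝ))ᵀ =
      -(t • fromBlocks (0 : Matrix (Fin p) (Fin p) ℝ) (-Bᵀ) B
        (0 : Matrix (Fin (n-p)) (Fin (n-p)) ℝ)) := by
    rw [Matrix.transpose_smul, hXskew, smul_neg]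
  have htA : (t • A)ᵀ = -(t • A) := by rw [Matrix.transpose_smul, hA, smul_neg]
  obtain ⟨he1, he2⟩ := exp_skew_orth _ htX
  obtain ⟨hf1, hf2⟩ := exp_skew_orth _ htA
  have hcomm : exp (t • A) * A = A * exp (t • A) :=
    ((Commute.refl A).smul_left t).exp_left
  have hP : (fromCols U Uperp * exp (t • fromBlocks (0 : Matrix (Fin p) (Fin p) ℝ) (-Bᵀ) B
      (0 : Matrix (Fin (n-p)) (Fin (n-p)) ℝ)))ᵀ *
      (fromCols U Uperp * exp (t • fromBlocks (0 : Matrix (Fin p) (Fin p) ℝ) (-Bᵀ) B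
        (0 : Matrix (Fin (n-p)) (Fin (n-p)) ℝ))) = 1 := by
    rw [Matrix.transpose_mul, Matrix.mul_assoc,
      ← Matrix.mul_assoc (fromCols U Uperp)ᵀ (fromCols U Uperp), hO₁, Matrix.one_mul, he1]
  rw [econQG_t, d1_t, d2_t, frob_sq]
  exact core_calc _ hP _ A B hf1 hf2 hA hcomm
end

section
/- Let U and Ũ be real n×p matrices with UᵀU = ŨᵀŨ = I_p. Suppose R ∈ O(p), A is a p×p real skew-symmetric matrix with exp_m(A) = Rᵀ, Q is an n×p matrix with QᵀQ = I_p and UᵀQ = 0, V ∈ O(p), and Σ is a p×p diagonal matrix such that UᵀŨR = V cos(Σ)Vᵀ and (I_n − UUᵀ)ŨR = Q sin(Σ)Vᵀ. Then the curve γ(t) = (UV cos(tΣ) + Q sin(tΣ))Vᵀ exp_m(tA) satisfies γ(0) = U, γ(1) = Ũ, and γ′(0) = UA + QΣVᵀ; i.e. the economy-size quasi-geodesic produced by Algorithm 1 connects U to Ũ. -/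
open Matrix NormedSpace

attribute [local instance] Matrix.frobeniusNormedAddCommGroup Matrix.frobeniusNormedSpace
attribute [local instance] Matrix.frobeniusNormedRing Matrix.frobeniusNormedAlgebra

lemma diag_as_sum {p : ℕ} (d : Fin p → ℝ) :
    Matrix.diagonal d = ∑ i, d i • Matrix.single i i (1 : ℝ) := by
  ext a b
  simp only [Matrix.sum_apply, Matrix.smul_apply, Matrix.single, Matrix.of_apply,
    smul_eq_mul, mul_ite, mul_one, mul_zero]
  by_cases hab : a = b
  · subst hab
    rw [Matrix.diagonal_apply_eq]
    rw [Finset.sum_eq_single a]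
    · simp
    · intro i _ hi; simp [hi]
    · simp
  · rw [Matrix.diagonal_apply_ne _ hab]
    refine (Finset.sum_eq_zero ?_).symm
    intro i _
    simp only [ite_eq_right_iff, and_imp]
    rintro rfl rfl; exact absurd rfl hab

/-- the economy-size quasi-geodesic produced by Algorithm 1 connects `U` to `Ũ`:
`γ(0) = U`, `γ(1) = Ũ` and `γ′(0) = UA + QΣVᵀ`. -/
theorem stmt10 (n p : ℕ) (U Utilde : Matrix (Fin n) (Fin p) ℝ)
    (R A : Matrix (Fin p) (Fin p) ℝ)
    (Q : Matrix (Fin n) (Fin p) ℝ) (Sg V : Matrix (Fin p) (Fin p) ℝ)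
    (hU : Uᵀ * U = 1) (hUt : Utildeᵀ * Utilde = 1)
    (hR₁ : Rᵀ * R = 1) (hR₂ : R * Rᵀ = 1)
    (hA : Aᵀ = -A) (hAR : NormedSpace.exp A = Rᵀ)
    (hQ : Qᵀ * Q = 1) (hUQ : Uᵀ * Q = 0)
    (hV₁ : Vᵀ * V = 1) (hV₂ : V * Vᵀ = 1)
    (hSgdiag : Sg.IsDiag)
    (hcos : Uᵀ * (Utilde * R) = V * Matrix.diagonal (fun i => Real.cos (Sg i i)) * Vᵀ)
    (hsin : ((1 : Matrix (Fin n) (Fin n) ℝ) - U * Uᵀ) * (Utilde * R) =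
      Q * Matrix.diagonal (fun i => Real.sin (Sg i i)) * Vᵀ) :
    (U * V * Matrix.diagonal (fun i => Real.cos ((0 : ℝ) * Sg i i)) +
        Q * Matrix.diagonal (fun i => Real.sin ((0 : ℝ) * Sg i i))) * Vᵀ * NormedSpace.exp ((0 : ℝ) • A)
      = U ∧
    (U * V * Matrix.diagonal (fun i => Real.cos ((1 : ℝ) * Sg i i)) +
        Q * Matrix.diagonal (fun i => Real.sin ((1 : ℝ) * Sg i i))) * Vᵀ * NormedSpace.exp ((1 : ℝ) • A)
      = Utilde ∧
    HasDerivAt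
      (fun t : ℝ =>
        (U * V * Matrix.diagonal (fun i => Real.cos (t * Sg i i)) +
          Q * Matrix.diagonal (fun i => Real.sin (t * Sg i i))) * Vᵀ * NormedSpace.exp (t • A))
      (U * A + Q * Sg * Vᵀ) 0 := by
  have hexp0 : NormedSpace.exp ((0 : ℝ) • A) = 1 := by rw [zero_smul, exp_zero]
  refine ⟨?_, ?_, ?_⟩
  · -- γ(0) = U
    simp only [zero_mul, Real.cos_zero, Real.sin_zero, Matrix.diagonal_one, hexp0,
      Matrix.diagonal_zero, Matrix.mul_one, Matrix.mul_zero, add_zero]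
    rw [Matrix.mul_assoc, hV₂, Matrix.mul_one]
  · -- γ(1) = Utilde
    simp only [one_mul, one_smul, hAR]
    have key : (U * V * Matrix.diagonal (fun i => Real.cos (Sg i i)) +
        Q * Matrix.diagonal (fun i => Real.sin (Sg i i))) * Vᵀ = Utilde * R := by
      have h1 : U * V * Matrix.diagonal (fun i => Real.cos (Sg i i)) * Vᵀ
          = U * (Uᵀ * (Utilde * R)) := by
        rw [Matrix.mul_assoc U V, Matrix.mul_assoc U (V * _) Vᵀ, ← hcos]
      have h2 : Q * Matrix.diagonal (fun i => Real.sin (Sg i i)) * Vᵀ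
          = ((1 : Matrix (Fin n) (Fin n) ℝ) - U * Uᵀ) * (Utilde * R) := hsin.symm
      calc (U * V * Matrix.diagonal (fun i => Real.cos (Sg i i)) +
          Q * Matrix.diagonal (fun i => Real.sin (Sg i i))) * Vᵀ
          = U * V * Matrix.diagonal (fun i => Real.cos (Sg i i)) * Vᵀ +
            Q * Matrix.diagonal (fun i => Real.sin (Sg i i)) * Vᵀ := by rw [Matrix.add_mul]
        _ = U * (Uᵀ * (Utilde * R)) +
            ((1 : Matrix (Fin n) (Fin n) ℝ) - U * Uᵀ) * (Utilde * R) := by rw [h1, h2]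
        _ = Utilde * R := by
            rw [Matrix.sub_mul, Matrix.one_mul, ← Matrix.mul_assoc]; abel
    rw [key, Matrix.mul_assoc, hR₂, Matrix.mul_one]
  · -- derivative
    set c : Fin p → ℝ := fun i => Sg i i with hc
    set E : ℝ → Matrix (Fin p) (Fin p) ℝ := fun t => NormedSpace.exp (t • A) with hE
    -- derivative of cos-diagonal at 0 is 0
    have hCos : HasDerivAt (fun t : ℝ => Matrix.diagonal (fun i => Real.cos (t * c i)))
        (0 : Matrix (Fin p) (Fin p) ℝ) 0 := by
      have heq : (fun t : ℝ => Matrix.diagonal (fun i => Real.cos (t * c i)))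
          = fun t : ℝ => ∑ i, Real.cos (t * c i) • Matrix.single i i (1 : ℝ) := by
        funext t; exact diag_as_sum _
      rw [heq]
      have h := HasDerivAt.sum (u := Finset.univ)
        (fun i _ => (((Real.hasDerivAt_cos ((0:ℝ) * c i)).comp 0
          ((hasDerivAt_id (0:ℝ)).mul_const (c i)))).smul_const
          (Matrix.single i i (1 : ℝ)))
      convert h using 1
      case e'_4 => rfl
      case e'_5 => rfl
      case e'_6 => rfl
      case e'_8 => funext t; rw [Finset.sum_apply]; rfl
      simp
    have hSin : HasDerivAt (fun t : ℝ => Matrix.diagonal (fun i => Real.sin (t * c i)))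
        (Matrix.diagonal c) 0 := by
      have heq : (fun t : ℝ => Matrix.diagonal (fun i => Real.sin (t * c i)))
          = fun t : ℝ => ∑ i, Real.sin (t * c i) • Matrix.single i i (1 : ℝ) := by
        funext t; exact diag_as_sum _
      rw [heq]
      have h := HasDerivAt.sum (u := Finset.univ)
        (fun i _ => (((Real.hasDerivAt_sin ((0:ℝ) * c i)).comp 0
          ((hasDerivAt_id (0:ℝ)).mul_const (c i)))).smul_const
          (Matrix.single i i (1 : ℝ)))
      convert h using 1
      case e'_4 => rfl
      case e'_5 => rfl
      case e'_6 => rfl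
      case e'_8 => funext t; rw [Finset.sum_apply]; rfl
      rw [diag_as_sum]
      simp
    have hExp : HasDerivAt E A 0 := by
      have h := hasDerivAt_exp_smul_const (𝕂 := ℝ) A 0
      simp [hexp0] at h; exact h
    have hVE : HasDerivAt (fun t => Vᵀ * E t) (Vᵀ * A) 0 := hExp.const_mul Vᵀ
    -- inner square-matrix derivatives
    have hG1 : HasDerivAt (fun t : ℝ =>
        Matrix.diagonal (fun i => Real.cos (t * c i)) * (Vᵀ * E t)) (Vᵀ * A) 0 := by
      have h := hCos.mul hVE
      convert h using 1
      case e'_4 => rfl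
      case e'_5 => rfl
      case e'_6 => rfl
      case e'_8 => rfl
      simp [hE, hexp0]
    have hG2 : HasDerivAt (fun t : ℝ =>
        Matrix.diagonal (fun i => Real.sin (t * c i)) * (Vᵀ * E t))
        (Matrix.diagonal c * Vᵀ) 0 := by
      have h := hSin.mul hVE
      convert h using 1
      case e'_4 => rfl
      case e'_5 => rfl
      case e'_6 => rfl
      case e'_8 => rfl
      simp [hE, hexp0]
    -- left multiplication by a constant rectangular matrix as a CLM
    have lmul : ∀ (M : Matrix (Fin n) (Fin p) ℝ)
        (f : ℝ → Matrix (Fin p) (Fin p) ℝ) (f' : Matrix (Fin p) (Fin p) ℝ),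
        HasDerivAt f f' 0 → HasDerivAt (fun t => M * f t) (M * f') 0 := by
      intro M f f' hf
      let L : Matrix (Fin p) (Fin p) ℝ →ₗ[ℝ] Matrix (Fin n) (Fin p) ℝ :=
        { toFun := fun X => M * X
          map_add' := fun X Y => Matrix.mul_add M X Y
          map_smul' := fun r X => Matrix.mul_smul M r X }
      exact (LinearMap.toContinuousLinearMap L).hasFDerivAt.comp_hasDerivAt 0 hf
    have h1 := lmul (U * V) _ _ hG1
    have h2 := lmul Q _ _ hG2
    have htotal := h1.add h2
    have hfun : (fun t : ℝ =>
        (U * V * Matrix.diagonal (fun i => Real.cos (t * Sg i i)) +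
          Q * Matrix.diagonal (fun i => Real.sin (t * Sg i i))) * Vᵀ * NormedSpace.exp (t • A))
        = (fun t : ℝ =>
          U * V * (Matrix.diagonal (fun i => Real.cos (t * c i)) * (Vᵀ * E t)) +
          Q * (Matrix.diagonal (fun i => Real.sin (t * c i)) * (Vᵀ * E t))) := by
      funext t
      simp only [hE, hc, Matrix.add_mul, Matrix.mul_assoc]
    rw [hfun]
    convert htotal using 1
    case e'_4 => rfl
    case e'_5 => rfl
    case e'_6 => rfl
    case e'_8 => rfl
    have hdc : Matrix.diagonal c = Sg := hSgdiag.diagonal_diag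
    rw [hdc, ← Matrix.mul_assoc (U * V) Vᵀ A, Matrix.mul_assoc U V Vᵀ, hV₂,
      Matrix.mul_one, ← Matrix.mul_assoc Q Sg Vᵀ]
end

section
/- Let U and Q be real n×p matrices with UᵀU = QᵀQ = I_p and UᵀQ = 0, and let A, C be p×p real skew-symmetric matrices and B a p×p real matrix. Then for every t ∈ ℝ, the matrix ρ(t) = (U Q) exp_m(t[[A, −Bᵀ],[B, C]]) [I_p; 0] satisfies ρ(t)ᵀρ(t) = I_p, and ρ(0) = U; i.e. the short economy-size quasi-geodesic stays on the Stiefel manifold St(n,p) and starts at U. -/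
open Matrix NormedSpace

attribute [local instance] Matrix.frobeniusNormedAddCommGroup Matrix.frobeniusNormedSpace

/-- The short economy-size quasi-geodesic `ρ(t) = (U Q) exp_m(t[[A,−Bᵀ],[B,C]]) [I_p; 0]`. -/
noncomputable def shortQG (n p : ℕ) (U Q : Matrix (Fin n) (Fin p) ℝ)
    (A B C : Matrix (Fin p) (Fin p) ℝ) (t : ℝ) : Matrix (Fin n) (Fin p) ℝ :=
  fromCols U Q * exp (t • fromBlocks A (-Bᵀ) B C) * fromRows 1 0

/-- The accompanying curve `ρ⊥(t) = (U Q) exp_m(t[[A,−Bᵀ],[B,C]]) [0; I_p]`. -/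
noncomputable def shortQGperp (n p : ℕ) (U Q : Matrix (Fin n) (Fin p) ℝ)
    (A B C : Matrix (Fin p) (Fin p) ℝ) (t : ℝ) : Matrix (Fin n) (Fin p) ℝ :=
  fromCols U Q * exp (t • fromBlocks A (-Bᵀ) B C) * fromRows 0 1

/-- the short economy-size quasi-geodesic stays on the Stiefel manifold
and starts at `U`. -/
theorem stmt12 (n p : ℕ) (U Q : Matrix (Fin n) (Fin p) ℝ)
    (A B C : Matrix (Fin p) (Fin p) ℝ)
    (hU : Uᵀ * U = 1) (hQ : Qᵀ * Q = 1) (hUQ : Uᵀ * Q = 0)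
    (hA : Aᵀ = -A) (hC : Cᵀ = -C) :
    (∀ t : ℝ, (shortQG n p U Q A B C t)ᵀ * shortQG n p U Q A B C t = 1) ∧
    shortQG n p U Q A B C 0 = U := by
  have key : ∀ t : ℝ, (shortQG n p U Q A B C t)ᵀ * shortQG n p U Q A B C t = 1 := by
    intro t
    set M : Matrix (Fin p ⊕ Fin p) (Fin p ⊕ Fin p) ℝ := t • fromBlocks A (-Bᵀ) B C with hM
    have hskew : Mᵀ = -M := by
      simp only [hM, transpose_smul, fromBlocks_transpose, hA, hC, transpose_neg,
        transpose_transpose, ← smul_neg, Matrix.fromBlocks_neg, neg_neg]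
    have hQU : Qᵀ * U = 0 := by
      have := congrArg transpose hUQ
      simpa [transpose_mul] using this
    have hcols : (fromCols U Q)ᵀ * fromCols U Q = 1 := by
      rw [transpose_fromCols, fromRows_mul_fromCols, hU, hUQ, hQU, hQ, ← fromBlocks_one]
    have hexp : exp (-M) * exp M = 1 := by
      rw [← Matrix.exp_add_of_commute (-M) M ((Commute.refl M).neg_left), neg_add_cancel,
        exp_zero]
    show (fromCols U Q * exp M * (fromRows 1 0 : Matrix (Fin p ⊕ Fin p) (Fin p) ℝ))ᵀ *
      (fromCols U Q * exp M * (fromRows 1 0 : Matrix (Fin p ⊕ Fin p) (Fin p) ℝ)) = 1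
    simp only [transpose_mul, transpose_fromRows, Matrix.mul_assoc]
    rw [← Matrix.mul_assoc (fromCols U Q)ᵀ (fromCols U Q), hcols, Matrix.one_mul,
      ← Matrix.mul_assoc (exp M)ᵀ, ← Matrix.exp_transpose M, hskew, hexp, Matrix.one_mul,
      fromCols_mul_fromRows]
    simp
  refine ⟨key, ?_⟩
  show fromCols U Q * exp ((0:ℝ) • fromBlocks A (-Bᵀ) B C) *
    (fromRows 1 0 : Matrix (Fin p ⊕ Fin p) (Fin p) ℝ) = U
  simp [exp_zero, fromCols_mul_fromRows]
end

section
/- Let U, Ũ be real n×p matrices with UᵀU = ŨᵀŨ = I_p, let Q be an n×p matrix with QᵀQ = I_p and UᵀQ = 0, let R, V ∈ O(p), let Σ be a p×p diagonal matrix, and let c ∈ so(p). Assume UᵀŨR = V cos(Σ)Vᵀ and (I_n − UUᵀ)ŨR = Q sin(Σ)Vᵀ, and suppose M = [[A,−Bᵀ],[B,C]] is a 2p×2p matrix (A, C ∈ so(p), B ∈ ℝ^{p×p}) satisfying exp_m(M) = [[V cos(Σ)VᵀRᵀ, −V sin(Σ)exp_m(c)],[sin(Σ)VᵀRᵀ,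 cos(Σ)exp_m(c)]]. Then the curve ρ(t) = (U Q) exp_m(tM) [I_p; 0] satisfies ρ(0) = U and ρ(1) = Ũ; i.e. the short economy-size quasi-geodesic produced by Algorithm 2 connects U and Ũ. -/
open Matrix NormedSpace

/-- the short economy-size quasi-geodesic produced by Algorithm 2,
`ρ(t) = (U Q) exp_m(tM) [I_p; 0]` with
`exp_m(M) = [[V cos(Σ)VᵀRᵀ, −V sin(Σ)exp_m(c)],[sin(Σ)VᵀRᵀ, cos(Σ)exp_m(c)]]`,
connects `U` and `Ũ`: `ρ(0) = U` and `ρ(1) = Ũ`. -/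
theorem stmt19 (n p : ℕ) (U Utilde Q : Matrix (Fin n) (Fin p) ℝ)
    (R V Sg c A B C : Matrix (Fin p) (Fin p) ℝ)
    (hU : Uᵀ * U = 1) (hUt : Utildeᵀ * Utilde = 1)
    (hQ : Qᵀ * Q = 1) (hUQ : Uᵀ * Q = 0)
    (hR₁ : Rᵀ * R = 1) (hR₂ : R * Rᵀ = 1)
    (hV₁ : Vᵀ * V = 1) (hV₂ : V * Vᵀ = 1)
    (hSgdiag : Sg.IsDiag) (hc : cᵀ = -c)
    (hA : Aᵀ = -A) (hC : Cᵀ = -C)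
    (hcos : Uᵀ * (Utilde * R) = V * Matrix.diagonal (fun i => Real.cos (Sg i i)) * Vᵀ)
    (hsin : ((1 : Matrix (Fin n) (Fin n) ℝ) - U * Uᵀ) * (Utilde * R) =
      Q * Matrix.diagonal (fun i => Real.sin (Sg i i)) * Vᵀ)
    (hexpM : NormedSpace.exp (fromBlocks A (-Bᵀ) B C) =
      fromBlocks
        (V * Matrix.diagonal (fun i => Real.cos (Sg i i)) * Vᵀ * Rᵀ)
        (-(V * Matrix.diagonal (fun i => Real.sin (Sg i i)) * NormedSpace.exp c))
        (Matrix.diagonal (fun i => Real.sin (Sg i i)) * Vᵀ * Rᵀ)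
        (Matrix.diagonal (fun i => Real.cos (Sg i i)) * NormedSpace.exp c)) :
    fromCols U Q * NormedSpace.exp ((0 : ℝ) • fromBlocks A (-Bᵀ) B C) *
        (fromRows 1 0 : Matrix (Fin p ⊕ Fin p) (Fin p) ℝ) = U ∧
    fromCols U Q * NormedSpace.exp ((1 : ℝ) • fromBlocks A (-Bᵀ) B C) *
        (fromRows 1 0 : Matrix (Fin p ⊕ Fin p) (Fin p) ℝ) = Utilde := by
  have key : Utilde = U * (V * Matrix.diagonal (fun i => Real.cos (Sg i i)) * Vᵀ * Rᵀ) +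
      Q * (Matrix.diagonal (fun i => Real.sin (Sg i i)) * Vᵀ * Rᵀ) := by
    have h1 : Utilde * R = U * (V * Matrix.diagonal (fun i => Real.cos (Sg i i)) * Vᵀ) +
        Q * (Matrix.diagonal (fun i => Real.sin (Sg i i)) * Vᵀ) := by
      have h := hsin
      rw [Matrix.sub_mul, Matrix.one_mul, Matrix.mul_assoc U Uᵀ, hcos,
        sub_eq_iff_eq_add] at h
      rw [h]
      rw [add_comm]
      simp [Matrix.mul_assoc]
    calc Utilde = Utilde * R * Rᵀ := by rw [Matrix.mul_assoc, hR₂, Matrix.mul_one]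
    _ = _ := by rw [h1]; simp [Matrix.add_mul, Matrix.mul_assoc]
  constructor
  · simp [Matrix.mul_assoc, fromBlocks_mul_fromRows, fromCols_mul_fromRows]
  · rw [one_smul, hexpM, Matrix.mul_assoc, fromBlocks_mul_fromRows, fromCols_mul_fromRows,
      Matrix.mul_one, Matrix.mul_zero, add_zero, Matrix.mul_one, Matrix.mul_zero, add_zero, key]
end
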